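/- arXiv:2502.10020 — 6 statements merged into one kernel-verified Lean document; each statement's English description precedes it below -/
import Mathlib

section
/- Let d, T ∈ ℕ, B, α > 0, and 𝒯 ⊆ [T] a set of update rounds. For each t ∈ [T] let S_t be a finite assortment with feature vectors x_{ti} ∈ ℝ^d satisfying ‖x_{ti}‖₂ ≤ 1, let y_t be a one-hot response vector over S_t ∪ {0}, and let ℓ_t(w) = −Σ_{i∈S_t∪{0}} y_{ti} log p_t(i|S_t,w) be the MNL loss. Let w* ∈ ℝ^d with ‖w*‖₂ ≤ B, let η = 1 + (3√2/2)α and λ ≥ 12√2 ηα. For each t ∈ 𝒯 let 𝒲_t ⊆ ℝ^d be a compact convex set with w* ∈ 𝒲_t and sup_{w∈𝒲_t} |x_{ti}ᵀ(w − w*)| ≤ α for all i ∈ S_t. Define: H_t = λ I_d + Σ_{s∈𝒯, s<t} ∇²ℓ_s(w_{s+1}); at the first update round t₁, w_{t₁} arbitrary with ‖w_{t₁}‖₂ ≤ B; at each update round t ∈ 𝒯, w_t' = argmin_{w∈𝒲_t} ‖w − w_t‖_{H_t} and w_{t+1} = argmin_{w∈𝒲_t} [ ℓ̃_t(w) + (1/(2η))‖w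 − w_t'‖²_{H_t} ], where ℓ̃_t(w) = ℓ_t(w_t') + ⟨∇ℓ_t(w_t'), w − w_t'⟩ + (1/2)‖w − w_t'‖²_{∇²ℓ_t(w_t')}; and w_{t+1} = w_t on non-update rounds. Then for every t ∈ 𝒯, writing 𝒯_{t+1} = {s ∈ 𝒯 : s ≤ t}: ‖w_{t+1} − w*‖²_{H_{t+1}} ≤ 2η Σ_{s∈𝒯_{t+1}} (ℓ_s(w*) − ℓ_s(w_{s+1})) + 4B²λ − (1/2) Σ_{s∈𝒯_{t+1}} ‖w_{s+1} − w_s'‖²_{H_s}. -/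
open Matrix

noncomputable section

/-- MNL choice probability of item `i ∈ S`. -/
def mnlProb {d : ℕ} {ι : Type*} (S : Finset ι) (x : ι → Fin d → ℝ)
    (w : Fin d → ℝ) (i : ι) : ℝ :=
  Real.exp (x i ⬝ᵥ w) / (1 + ∑ j ∈ S, Real.exp (x j ⬝ᵥ w))

/-- MNL probability of the outside option. -/
def mnlProb0 {d : ℕ} {ι : Type*} (S : Finset ι) (x : ι → Fin d → ℝ)
    (w : Fin d → ℝ) : ℝ :=
  1 / (1 + ∑ j ∈ S, Real.exp (x j ⬝ᵥ w))

/-- MNL loss for a response `y` over `S ∪ {0}` (with `y0` the response for the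
outside option). -/
def mnlLoss {d : ℕ} {ι : Type*} (S : Finset ι) (x : ι → Fin d → ℝ)
    (y : ι → ℝ) (y0 : ℝ) (w : Fin d → ℝ) : ℝ :=
  -(y0 * Real.log (mnlProb0 S x w) + ∑ i ∈ S, y i * Real.log (mnlProb S x w i))

/-- Gradient of the MNL loss: `∇ℓ(w) = Σ_{i∈S} (p(i|S,w) − yᵢ) xᵢ`. -/
def mnlGrad {d : ℕ} {ι : Type*} (S : Finset ι) (x : ι → Fin d → ℝ)
    (y : ι → ℝ) (w : Fin d → ℝ) : Fin d → ℝ :=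
  ∑ i ∈ S, (mnlProb S x w i - y i) • x i

/-- Hessian of the MNL loss. -/
def mnlHess {d : ℕ} {ι : Type*} (S : Finset ι) (x : ι → Fin d → ℝ)
    (w : Fin d → ℝ) : Matrix (Fin d) (Fin d) ℝ :=
  (∑ i ∈ S, mnlProb S x w i • vecMulVec (x i) (x i))
    - vecMulVec (∑ i ∈ S, mnlProb S x w i • x i) (∑ i ∈ S, mnlProb S x w i • x i)

/-- Quadratic form `vᵀ M v` (i.e. `‖v‖²_M`). -/
def quadForm {d : ℕ} (M : Matrix (Fin d) (Fin d) ℝ) (v : Fin d → ℝ) : ℝ :=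
  v ⬝ᵥ M.mulVec v

/-- Matrix-weighted norm `‖v‖_M = √(vᵀMv)`. -/
def mnorm {d : ℕ} (M : Matrix (Fin d) (Fin d) ℝ) (v : Fin d → ℝ) : ℝ :=
  Real.sqrt (quadForm M v)

/-- Euclidean (ℓ₂) norm on `Fin d → ℝ`. -/
def l2norm {d : ℕ} (v : Fin d → ℝ) : ℝ := Real.sqrt (v ⬝ᵥ v)

end

/-!
Each update round `t` gives the one-step inequality
`‖w_{t+1} - w*‖²_{H_{t+1}}`
`  ≤ ‖w_t - w*‖²_{H_t} + 2η (ℓ_t(w*) - ℓ_t(w_{t+1})) - ½ ‖w_{t+1} - w_t'‖²_{H_t}`,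
and on the other rounds neither `w` nor `H` moves, so the bound follows by summing these
inequalities, starting from `‖w_1 - w*‖²_{λ I} ≤ 4 B² λ`.

For the one-step inequality, restrict the MNL loss to a segment `s ↦ w + s • Δ`: the first and
second derivatives of its log-partition function are the mean and the variance of `xᵢ ⬝ᵥ Δ` under
the choice probabilities, and when `|xᵢ ⬝ᵥ Δ| ≤ β` these probabilities change by a factor of at
most `e^{2βs}`. Integrating twice gives the self-concordance bound
`ℓ(w + Δ) ≥ ℓ(w) + ∇ℓ(w) ⬝ᵥ Δ + ‖Δ‖²_{∇²ℓ(w)} / (2 + 2β)`, used between `w_{t+1}` and `w*` with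
`2 + 2α ≤ 2η`, and a bound `3γβ²` on the Taylor error of the gradient, used between `w_t'` and
`w_{t+1}` and absorbed by `λ ≥ 12ηα`. The remaining terms are controlled by the first-order
optimality conditions of the two argmin steps over the convex set `𝒲_t` and by the three-point
identity for `‖·‖_{H_t}`.
-/

open Finset

section WeightedMoments

variable {ι : Type*}

/-- The missing mass `1 - ∑ i ∈ S, p i` is the outside option, at which every statistic takes
the value `0`. -/
def wmean (S : Finset ι) (p f : ι → ℝ) : ℝ := ∑ i ∈ S, p i * f i

def wcov (S : Finset ι) (p f g : ι → ℝ) : ℝ := wmean S p (f * g) - wmean S p f * wmean S p g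

variable {S : Finset ι}

lemma wcov_eq_sum (p f g : ι → ℝ) :
    wcov S p f g = wmean S p (fun i => (f i - wmean S p f) * g i) := by
  simp only [wcov, wmean, mul_sum, ← sum_sub_distrib, Pi.mul_apply]
  exact sum_congr rfl fun i _ => by ring

lemma wcov_comm (p f g : ι → ℝ) : wcov S p f g = wcov S p g f := by
  rw [wcov, wcov, mul_comm f, mul_comm (wmean S p f)]

lemma wcov_self_add_sq (p f : ι → ℝ) (c : ℝ) :
    wcov S p f f + (c - wmean S p f) ^ 2
      = (1 - ∑ i ∈ S, p i) * c ^ 2 + ∑ i ∈ S, p i * (f i - c) ^ 2 := by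
  have h : ∑ i ∈ S, p i * (f i - c) ^ 2
      = wmean S p (f * f) - 2 * c * wmean S p f + c ^ 2 * ∑ i ∈ S, p i := by
    simp only [wmean, mul_sum, ← sum_sub_distrib, ← sum_add_distrib, Pi.mul_apply]
    exact sum_congr rfl fun i _ => by ring
  rw [h, wcov]
  ring

lemma abs_wmean_le {p : ι → ℝ} (hp : ∀ i ∈ S, 0 ≤ p i) (hp1 : ∑ i ∈ S, p i ≤ 1)
    {f : ι → ℝ} {F : ℝ} (hF0 : 0 ≤ F) (hf : ∀ i ∈ S, |f i| ≤ F) :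
    |wmean S p f| ≤ F :=
  calc |wmean S p f| ≤ ∑ i ∈ S, p i * F := by
        refine (abs_sum_le_sum_abs _ _).trans (sum_le_sum fun i hi => ?_)
        rw [abs_mul, abs_of_nonneg (hp i hi)]
        exact mul_le_mul_of_nonneg_left (hf i hi) (hp i hi)
    _ = (∑ i ∈ S, p i) * F := by rw [sum_mul]
    _ ≤ F := mul_le_of_le_one_left hF0 hp1

lemma abs_wcov_le {p : ι → ℝ} (hp : ∀ i ∈ S, 0 ≤ p i) (hp1 : ∑ i ∈ S, p i ≤ 1)
    {f g : ι → ℝ} {F G : ℝ} (hF0 : 0 ≤ F) (hG0 : 0 ≤ G) (hf : ∀ i ∈ S, |f i| ≤ F)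
    (hg : ∀ i ∈ S, |g i| ≤ G) :
    |wcov S p f g| ≤ 2 * F * G := by
  have hm := abs_wmean_le hp hp1 hF0 hf
  rw [wcov_eq_sum]
  refine abs_wmean_le hp hp1 (by positivity : 0 ≤ 2 * F * G) fun i hi => ?_
  calc |(f i - wmean S p f) * g i| ≤ (F + F) * G := by
        rw [abs_mul]
        exact mul_le_mul ((abs_sub _ _).trans (add_le_add (hf i hi) hm)) (hg i hi)
          (abs_nonneg _) (by positivity)
    _ = 2 * F * G := by ring

lemma wcov_self_nonneg {p : ι → ℝ} (hp : ∀ i ∈ S, 0 ≤ p i) (hp1 : ∑ i ∈ S, p i ≤ 1)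
    (f : ι → ℝ) : 0 ≤ wcov S p f f := by
  have h := wcov_self_add_sq (S := S) p f (wmean S p f)
  rw [sub_self, sq, mul_zero, add_zero] at h
  rw [h]
  exact add_nonneg (mul_nonneg (by linarith) (sq_nonneg _))
    (sum_nonneg fun i hi => mul_nonneg (hp i hi) (sq_nonneg _))

lemma mul_wcov_self_le {p q : ι → ℝ} (f : ι → ℝ) {θ : ℝ} (hθ : 0 ≤ θ)
    (hpq : ∀ i ∈ S, θ * p i ≤ q i) (hout : θ * (1 - ∑ i ∈ S, p i) ≤ 1 - ∑ i ∈ S, q i) :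
    θ * wcov S p f f ≤ wcov S q f f := by
  set m := wmean S q f
  have hq := wcov_self_add_sq (S := S) q f m
  rw [sub_self, sq, mul_zero, add_zero] at hq
  calc θ * wcov S p f f ≤ θ * (wcov S p f f + (m - wmean S p f) ^ 2) :=
        mul_le_mul_of_nonneg_left (le_add_of_nonneg_right (sq_nonneg _)) hθ
    _ = θ * (1 - ∑ i ∈ S, p i) * m ^ 2 + ∑ i ∈ S, θ * p i * (f i - m) ^ 2 := by
        rw [wcov_self_add_sq, mul_add, mul_sum, ← mul_assoc]
        simp only [mul_assoc]
    _ ≤ (1 - ∑ i ∈ S, q i) * m ^ 2 + ∑ i ∈ S, q i * (f i - m) ^ 2 :=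
        add_le_add (mul_le_mul_of_nonneg_right hout (sq_nonneg _))
          (sum_le_sum fun i hi => mul_le_mul_of_nonneg_right (hpq i hi) (sq_nonneg _))
    _ = wcov S q f f := hq.symm

end WeightedMoments

lemma add_deriv_le_of_deriv2_nonneg {f f' f'' : ℝ → ℝ} (hf : ∀ s, HasDerivAt f (f' s) s)
    (hf' : ∀ s, HasDerivAt f' (f'' s) s) (hf'' : ∀ s ∈ Set.Icc (0 : ℝ) 1, 0 ≤ f'' s) :
    f 0 + f' 0 ≤ f 1 := by
  have monotoneOn_of_hasDerivAt {g g' : ℝ → ℝ} (hg : ∀ s, HasDerivAt g (g' s) s)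
      (hg' : ∀ s ∈ Set.Icc (0 : ℝ) 1, 0 ≤ g' s) : MonotoneOn g (Set.Icc 0 1) :=
    monotoneOn_of_hasDerivWithinAt_nonneg (convex_Icc 0 1)
      (fun s _ => (hg s).continuousAt.continuousWithinAt) (fun s _ => (hg s).hasDerivWithinAt)
      fun s hs => hg' s (interior_subset hs)
  have h01 : (0 : ℝ) ∈ Set.Icc (0 : ℝ) 1 := Set.left_mem_Icc.2 zero_le_one
  have hf'_mono := monotoneOn_of_hasDerivAt hf' hf''
  have hg := monotoneOn_of_hasDerivAt (g := fun s => f s - s * f' 0)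
    (fun s => (hf s).sub (hasDerivAt_mul_const (f' 0)))
    fun s hs => sub_nonneg.2 (hf'_mono h01 hs hs.1)
  have := hg h01 (Set.right_mem_Icc.2 zero_le_one) zero_le_one
  simp only [zero_mul, sub_zero, one_mul] at this
  linarith

lemma two_sub_le_two_add_mul_exp_neg {c : ℝ} (hc : 0 ≤ c) : 2 - c ≤ (2 + c) * Real.exp (-c) := by
  have h := add_deriv_le_of_deriv2_nonneg
    (f := fun s => (2 + c * s) * Real.exp (-(c * s)) + c * s)
    (f' := fun s => c * (1 - (1 + c * s) * Real.exp (-(c * s))))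
    (f'' := fun s => c ^ 3 * s * Real.exp (-(c * s)))
    (fun s => by
      refine ((((hasDerivAt_id' s).const_mul c).const_add 2).fun_mul
        ((hasDerivAt_id' s).const_mul c).fun_neg.exp).fun_add
        ((hasDerivAt_id' s).const_mul c) |>.congr_deriv ?_
      ring)
    (fun s => by
      refine (((((hasDerivAt_id' s).const_mul c).const_add 1).fun_mul
        ((hasDerivAt_id' s).const_mul c).fun_neg.exp).const_sub 1).const_mul c |>.congr_deriv ?_
      ring)
    fun s hs => by have := hs.1; positivity
  simp only [mul_zero, add_zero, neg_zero, Real.exp_zero, mul_one, sub_self] at h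
  linarith

section SoftmaxLine

variable {ι : Type*} (S : Finset ι) (a b : ι → ℝ)

/-- With `a i = xᵢ ⬝ᵥ w` and `b i = xᵢ ⬝ᵥ Δ`, these are the MNL partition function and choice
probabilities at the point `w + s • Δ`. -/
noncomputable def linePartition (s : ℝ) : ℝ := 1 + ∑ i ∈ S, Real.exp (a i + s * b i)

noncomputable def lineProb (s : ℝ) (i : ι) : ℝ := Real.exp (a i + s * b i) / linePartition S a b s

lemma linePartition_pos (s : ℝ) : 0 < linePartition S a b s := by
  unfold linePartition
  positivity

lemma lineProb_nonneg (s : ℝ) (i : ι) : 0 ≤ lineProb S a b s i :=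
  div_nonneg (Real.exp_pos _).le (linePartition_pos S a b s).le

lemma one_sub_sum_lineProb (s : ℝ) :
    1 - ∑ i ∈ S, lineProb S a b s i = (linePartition S a b s)⁻¹ := by
  have hZ := (linePartition_pos S a b s).ne'
  simp only [lineProb]
  rw [← sum_div]
  field_simp
  unfold linePartition
  ring

lemma sum_lineProb_le_one (s : ℝ) : ∑ i ∈ S, lineProb S a b s i ≤ 1 := by
  have h := one_sub_sum_lineProb S a b s
  have := inv_pos.2 (linePartition_pos S a b s)
  linarith

lemma hasDerivAt_linePartition (s : ℝ) :
    HasDerivAt (linePartition S a b)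
      (linePartition S a b s * wmean S (lineProb S a b s) b) s := by
  have h : HasDerivAt (linePartition S a b) (∑ i ∈ S, Real.exp (a i + s * b i) * b i) s :=
    (HasDerivAt.fun_sum fun i _ => ((hasDerivAt_mul_const (b i)).const_add (a i)).exp).const_add 1
  convert h using 1
  simp only [wmean, lineProb, mul_sum]
  exact sum_congr rfl fun i _ => by field_simp [(linePartition_pos S a b s).ne']

lemma hasDerivAt_log_linePartition (s : ℝ) :
    HasDerivAt (fun s => Real.log (linePartition S a b s)) (wmean S (lineProb S a b s) b) s := by
  convert (hasDerivAt_linePartition S a b s).log (linePartition_pos S a b s).ne' using 1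
  field_simp [(linePartition_pos S a b s).ne']

lemma hasDerivAt_lineProb (s : ℝ) (i : ι) :
    HasDerivAt (fun s => lineProb S a b s i)
      (lineProb S a b s i * (b i - wmean S (lineProb S a b s) b)) s := by
  have hZ := (linePartition_pos S a b s).ne'
  refine ((((hasDerivAt_mul_const (b i)).const_add (a i)).exp).fun_div
    (hasDerivAt_linePartition S a b s) hZ).congr_deriv ?_
  simp only [lineProb]
  field_simp

lemma hasDerivAt_wmean_lineProb (f : ι → ℝ) (s : ℝ) :
    HasDerivAt (fun s => wmean S (lineProb S a b s) f) (wcov S (lineProb S a b s) b f) s := by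
  have h := HasDerivAt.fun_sum (u := S) fun i _ => (hasDerivAt_lineProb S a b s i).mul_const (f i)
  rw [wcov_eq_sum]
  refine h.congr_deriv (sum_congr rfl fun i _ => by ring)

lemma hasDerivAt_wcov_lineProb (f g : ι → ℝ) (s : ℝ) :
    HasDerivAt (fun s => wcov S (lineProb S a b s) f g)
      (wcov S (lineProb S a b s) b (f * g)
        - (wcov S (lineProb S a b s) b f * wmean S (lineProb S a b s) g
          + wmean S (lineProb S a b s) f * wcov S (lineProb S a b s) b g)) s :=
  (hasDerivAt_wmean_lineProb S a b (f * g) s).sub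
    ((hasDerivAt_wmean_lineProb S a b f s).mul (hasDerivAt_wmean_lineProb S a b g s))

variable {S a b} {β : ℝ}

lemma linePartition_le (hβ : 0 ≤ β) (hb : ∀ i ∈ S, |b i| ≤ β) {s : ℝ} (hs : 0 ≤ s) :
    linePartition S a b s ≤ Real.exp (β * s) * linePartition S a b 0 := by
  simp only [linePartition, mul_add, mul_one, mul_sum, ← Real.exp_add, zero_mul, add_zero]
  refine add_le_add (Real.one_le_exp (by positivity))
    (sum_le_sum fun i hi => Real.exp_le_exp.2 ?_)
  nlinarith [(abs_le.mp (hb i hi)).2]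

lemma exp_mul_lineProb_zero_le (hβ : 0 ≤ β) (hb : ∀ i ∈ S, |b i| ≤ β) {s : ℝ} (hs : 0 ≤ s)
    (i : ι) (hi : i ∈ S) :
    Real.exp (-(2 * β * s)) * lineProb S a b 0 i ≤ lineProb S a b s i := by
  have hexp : Real.exp (-(2 * β * s)) = Real.exp (-(β * s)) / Real.exp (β * s) := by
    rw [← Real.exp_sub]; ring_nf
  rw [hexp, lineProb, lineProb, div_mul_div_comm, ← Real.exp_add]
  refine div_le_div₀ (Real.exp_pos _).le (Real.exp_le_exp.2 ?_) (linePartition_pos S a b s)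
    (linePartition_le hβ hb hs)
  nlinarith [(abs_le.mp (hb i hi)).1]

lemma exp_mul_inv_linePartition_zero_le (hβ : 0 ≤ β) (hb : ∀ i ∈ S, |b i| ≤ β) {s : ℝ}
    (hs : 0 ≤ s) :
    Real.exp (-(2 * β * s)) * (linePartition S a b 0)⁻¹ ≤ (linePartition S a b s)⁻¹ := by
  rw [← div_eq_mul_inv, div_le_iff₀ (linePartition_pos S a b 0), ← div_eq_inv_mul,
    le_div_iff₀ (linePartition_pos S a b s)]
  calc Real.exp (-(2 * β * s)) * linePartition S a b s
      ≤ Real.exp (-(2 * β * s)) * (Real.exp (β * s) * linePartition S a b 0) := by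
        gcongr; exact linePartition_le hβ hb hs
    _ = Real.exp (-(β * s)) * linePartition S a b 0 := by
        rw [← mul_assoc, ← Real.exp_add]; ring_nf
    _ ≤ linePartition S a b 0 := by
        refine mul_le_of_le_one_left (linePartition_pos S a b 0).le (Real.exp_le_one_iff.2 ?_)
        nlinarith

lemma exp_mul_wcov_lineProb_zero_le (hβ : 0 ≤ β) (hb : ∀ i ∈ S, |b i| ≤ β) {s : ℝ}
    (hs : 0 ≤ s) :
    Real.exp (-(2 * β * s)) * wcov S (lineProb S a b 0) b b ≤ wcov S (lineProb S a b s) b b := by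
  refine mul_wcov_self_le b (Real.exp_pos _).le
    (exp_mul_lineProb_zero_le hβ hb hs) ?_
  rw [one_sub_sum_lineProb, one_sub_sum_lineProb]
  exact exp_mul_inv_linePartition_zero_le hβ hb hs

lemma le_log_linePartition_one (hβ : 0 < β) (hb : ∀ i ∈ S, |b i| ≤ β) :
    Real.log (linePartition S a b 0) + wmean S (lineProb S a b 0) b
      + wcov S (lineProb S a b 0) b b / (2 + 2 * β) ≤ Real.log (linePartition S a b 1) := by
  set m₀ := wmean S (lineProb S a b 0) b
  set v₀ := wcov S (lineProb S a b 0) b b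
  have hexp (s : ℝ) : HasDerivAt (fun s => Real.exp (-(2 * β * s)))
      (-(2 * β) * Real.exp (-(2 * β * s))) s := by
    refine ((hasDerivAt_id' s).const_mul (2 * β)).fun_neg.exp.congr_deriv ?_
    ring
  -- `4β²(log Z(s) - s m₀)` dominates `v₀ (e^{-2βs} + 2βs - 1)`: its second derivative is
  -- `4β² v(s) ≥ 4β² e^{-2βs} v₀`.
  have h := add_deriv_le_of_deriv2_nonneg
    (f := fun s => 4 * β ^ 2 * (Real.log (linePartition S a b s) - s * m₀)
      - v₀ * (Real.exp (-(2 * β * s)) + 2 * β * s - 1))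
    (f' := fun s => 4 * β ^ 2 * (wmean S (lineProb S a b s) b - m₀)
      - v₀ * (2 * β - 2 * β * Real.exp (-(2 * β * s))))
    (f'' := fun s => 4 * β ^ 2 * wcov S (lineProb S a b s) b b
      - v₀ * (4 * β ^ 2 * Real.exp (-(2 * β * s))))
    (fun s => by
      refine (((hasDerivAt_log_linePartition S a b s).fun_sub
        (hasDerivAt_mul_const m₀)).const_mul _).fun_sub
        ((((hexp s).fun_add ((hasDerivAt_id' s).const_mul (2 * β))).sub_const 1).const_mul v₀)
        |>.congr_deriv ?_
      ring)
    (fun s => by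
      refine (((hasDerivAt_wmean_lineProb S a b b s).sub_const m₀).const_mul _).fun_sub
        ((((hexp s).const_mul (2 * β)).const_sub (2 * β)).const_mul v₀) |>.congr_deriv ?_
      ring)
    fun s hs => by
      have := exp_mul_wcov_lineProb_zero_le (a := a) hβ.le hb hs.1
      nlinarith [sq_nonneg β]
  simp only [zero_mul, mul_zero, sub_zero, neg_zero, Real.exp_zero, add_zero, sub_self, mul_one,
    one_mul] at h
  have hκ : 4 * β ^ 2 ≤ (2 + 2 * β) * (Real.exp (-(2 * β)) + 2 * β - 1) := by
    nlinarith [two_sub_le_two_add_mul_exp_neg (by positivity : 0 ≤ 2 * β)]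
  have hv₀ : 0 ≤ v₀ := wcov_self_nonneg (fun i _ => lineProb_nonneg S a b 0 i)
    (sum_lineProb_le_one S a b 0) b
  have hX : v₀ / (2 + 2 * β) ≤ Real.log (linePartition S a b 1) - m₀
      - Real.log (linePartition S a b 0) := by
    rw [div_le_iff₀ (by positivity)]
    refine le_of_mul_le_mul_left ?_ (by positivity : 0 < 4 * β ^ 2)
    nlinarith [mul_le_mul_of_nonneg_left hκ hv₀]
  linarith

lemma wmean_lineProb_one_le {c : ι → ℝ} {γ : ℝ} (hβ : 0 ≤ β) (hγ : 0 ≤ γ)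
    (hb : ∀ i ∈ S, |b i| ≤ β) (hc : ∀ i ∈ S, |c i| ≤ γ) :
    wmean S (lineProb S a b 1) c
      ≤ wmean S (lineProb S a b 0) c + wcov S (lineProb S a b 0) b c + 3 * γ * β ^ 2 := by
  set p := lineProb S a b
  have hp (s : ℝ) : ∀ i ∈ S, 0 ≤ p s i := fun i _ => lineProb_nonneg S a b s i
  have hp1 (s : ℝ) : ∑ i ∈ S, p s i ≤ 1 := sum_lineProb_le_one S a b s
  have hbc : ∀ i ∈ S, |(b * c) i| ≤ β * γ := fun i hi => by
    rw [Pi.mul_apply, abs_mul]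
    exact mul_le_mul (hb i hi) (hc i hi) (abs_nonneg _) hβ
  -- the second derivative of `s ↦ wmean S (p s) c` is at most `6γβ²`
  have hthird (s : ℝ) : wcov S (p s) b (b * c)
      - (wcov S (p s) b b * wmean S (p s) c + wmean S (p s) b * wcov S (p s) b c)
      ≤ 6 * γ * β ^ 2 := by
    have h1 := abs_wcov_le (hp s) (hp1 s) hβ (by positivity) hb hbc
    have h2 := abs_wcov_le (hp s) (hp1 s) hβ hβ hb hb
    have h3 := abs_wcov_le (hp s) (hp1 s) hβ hγ hb hc
    have h4 := abs_wmean_le (hp s) (hp1 s) hγ hc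
    have h5 := abs_wmean_le (hp s) (hp1 s) hβ hb
    have h24 := abs_mul (wcov S (p s) b b) (wmean S (p s) c) ▸
      mul_le_mul h2 h4 (abs_nonneg _) (by positivity)
    have h53 := abs_mul (wmean S (p s) b) (wcov S (p s) b c) ▸
      mul_le_mul h5 h3 (abs_nonneg _) hβ
    nlinarith [abs_le.mp h1, abs_le.mp h24, abs_le.mp h53]
  have h := add_deriv_le_of_deriv2_nonneg
    (f := fun s => wmean S (p 0) c + s * wcov S (p 0) b c + 3 * γ * β ^ 2 * s ^ 2
      - wmean S (p s) c)
    (f' := fun s => wcov S (p 0) b c + 6 * γ * β ^ 2 * s - wcov S (p s) b c)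
    (f'' := fun s => 6 * γ * β ^ 2
      - (wcov S (p s) b (b * c)
        - (wcov S (p s) b b * wmean S (p s) c + wmean S (p s) b * wcov S (p s) b c)))
    (fun s => by
      refine ((((hasDerivAt_mul_const _).const_add _).fun_add
        ((hasDerivAt_pow 2 s).const_mul _)).fun_sub
        (hasDerivAt_wmean_lineProb S a b c s)).congr_deriv ?_
      ring)
    (fun s => ((((hasDerivAt_id' s).const_mul _).const_add _).fun_sub
        (hasDerivAt_wcov_lineProb S a b b c s)).congr_deriv (by ring))
    fun s _ => sub_nonneg.2 (hthird s)
  simp only [zero_mul, mul_zero, add_zero, sub_self, one_mul, one_pow, mul_one] at h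
  linarith

end SoftmaxLine

section MNL

variable {d : ℕ} {ι : Type*} (S : Finset ι) (x : ι → Fin d → ℝ)

lemma mnlProb_add_smul (w Δ : Fin d → ℝ) (s : ℝ) :
    mnlProb S x (w + s • Δ) = lineProb S (fun i => x i ⬝ᵥ w) (fun i => x i ⬝ᵥ Δ) s := by
  funext i
  simp only [mnlProb, lineProb, linePartition, dotProduct_add, dotProduct_smul, smul_eq_mul]

lemma mnlProb_eq_lineProb_zero (w Δ : Fin d → ℝ) :
    mnlProb S x w = lineProb S (fun i => x i ⬝ᵥ w) (fun i => x i ⬝ᵥ Δ) 0 := by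
  simpa using mnlProb_add_smul S x w Δ 0

lemma mnlLoss_add_smul {y : ι → ℝ} {y0 : ℝ} (hy : y0 + ∑ i ∈ S, y i = 1)
    (w Δ : Fin d → ℝ) (s : ℝ) :
    mnlLoss S x y y0 (w + s • Δ)
      = Real.log (linePartition S (fun i => x i ⬝ᵥ w) (fun i => x i ⬝ᵥ Δ) s)
        - ∑ i ∈ S, y i * (x i ⬝ᵥ w + s * x i ⬝ᵥ Δ) := by
  have hZ := linePartition_pos S (fun i => x i ⬝ᵥ w) (fun i => x i ⬝ᵥ Δ) s
  have hprob := congrFun (mnlProb_add_smul S x w Δ s)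
  simp only [lineProb] at hprob
  simp only [mnlLoss, hprob, mnlProb0, dotProduct_add, dotProduct_smul, smul_eq_mul]
  rw [one_div, Real.log_inv, show 1 + ∑ i ∈ S, Real.exp (x i ⬝ᵥ w + s * x i ⬝ᵥ Δ)
    = linePartition S (fun i => x i ⬝ᵥ w) (fun i => x i ⬝ᵥ Δ) s from rfl]
  simp only [Real.log_div (Real.exp_ne_zero _) hZ.ne', Real.log_exp, mul_sub, sum_sub_distrib,
    ← sum_mul]
  linear_combination Real.log (linePartition S (fun i => x i ⬝ᵥ w) (fun i => x i ⬝ᵥ Δ) s) * hy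

lemma mnlGrad_dotProduct (y : ι → ℝ) (w u : Fin d → ℝ) :
    mnlGrad S x y w ⬝ᵥ u
      = wmean S (mnlProb S x w) (fun i => x i ⬝ᵥ u) - ∑ i ∈ S, y i * x i ⬝ᵥ u := by
  simp only [mnlGrad, sum_dotProduct, smul_dotProduct, smul_eq_mul, sub_mul, sum_sub_distrib,
    wmean]

lemma dotProduct_mnlHess_mulVec (w u z : Fin d → ℝ) :
    u ⬝ᵥ mnlHess S x w *ᵥ z
      = wcov S (mnlProb S x w) (fun i => x i ⬝ᵥ u) (fun i => x i ⬝ᵥ z) := by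
  simp only [mnlHess, wcov, wmean, sub_mulVec, sum_mulVec, smul_mulVec, vecMulVec_mulVec,
    dotProduct_sub, dotProduct_sum, dotProduct_smul, sum_dotProduct, smul_dotProduct,
    op_smul_eq_smul, smul_eq_mul, Pi.mul_apply]
  simp only [dotProduct_comm u (x _)]
  congr 1
  · exact sum_congr rfl fun i _ => by ring
  · ring

lemma mnlHess_isSymm (w : Fin d → ℝ) : (mnlHess S x w).IsSymm := by
  simp [IsSymm, mnlHess, transpose_sum, transpose_smul, transpose_vecMulVec]

lemma quadForm_mnlHess_nonneg (w v : Fin d → ℝ) : 0 ≤ quadForm (mnlHess S x w) v := by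
  rw [quadForm, dotProduct_mnlHess_mulVec, mnlProb_eq_lineProb_zero S x w v]
  exact wcov_self_nonneg (fun i _ => lineProb_nonneg S _ _ 0 i) (sum_lineProb_le_one S _ _ 0) _

lemma le_mnlLoss_add {y : ι → ℝ} {y0 : ℝ} (hy : y0 + ∑ i ∈ S, y i = 1) {β : ℝ} (hβ : 0 < β)
    (w Δ : Fin d → ℝ) (hΔ : ∀ i ∈ S, |x i ⬝ᵥ Δ| ≤ β) :
    mnlLoss S x y y0 w + mnlGrad S x y w ⬝ᵥ Δ + quadForm (mnlHess S x w) Δ / (2 + 2 * β)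
      ≤ mnlLoss S x y y0 (w + Δ) := by
  have h := le_log_linePartition_one (a := fun i => x i ⬝ᵥ w) hβ hΔ
  have h0 := mnlLoss_add_smul S x hy w Δ 0
  have h1 := mnlLoss_add_smul S x hy w Δ 1
  rw [zero_smul, add_zero] at h0
  rw [one_smul] at h1
  rw [h0, h1, mnlGrad_dotProduct, quadForm, dotProduct_mnlHess_mulVec,
    mnlProb_eq_lineProb_zero S x w Δ]
  simp only [zero_mul, add_zero, one_mul, mul_add, sum_add_distrib]
  linarith

lemma mnlGrad_add_dotProduct_le (y : ι → ℝ) {β γ : ℝ} (hβ : 0 ≤ β) (hγ : 0 ≤ γ)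
    (w Δ u : Fin d → ℝ) (hΔ : ∀ i ∈ S, |x i ⬝ᵥ Δ| ≤ β) (hu : ∀ i ∈ S, |x i ⬝ᵥ u| ≤ γ) :
    mnlGrad S x y (w + Δ) ⬝ᵥ u
      ≤ mnlGrad S x y w ⬝ᵥ u + u ⬝ᵥ mnlHess S x w *ᵥ Δ + 3 * γ * β ^ 2 := by
  have h := wmean_lineProb_one_le (a := fun i => x i ⬝ᵥ w) hβ hγ hΔ hu
  have h1 := mnlProb_add_smul S x w Δ 1
  rw [one_smul] at h1
  rw [mnlGrad_dotProduct, mnlGrad_dotProduct, dotProduct_mnlHess_mulVec, h1, wcov_comm,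
    mnlProb_eq_lineProb_zero S x w Δ]
  linarith

end MNL

section QuadForm

variable {d : ℕ}

lemma add_quadForm (M N : Matrix (Fin d) (Fin d) ℝ) (v : Fin d → ℝ) :
    quadForm (M + N) v = quadForm M v + quadForm N v := by
  simp only [quadForm, add_mulVec, dotProduct_add]

lemma smul_quadForm (c : ℝ) (M : Matrix (Fin d) (Fin d) ℝ) (v : Fin d → ℝ) :
    quadForm (c • M) v = c * quadForm M v := by
  simp only [quadForm, smul_mulVec, dotProduct_smul, smul_eq_mul]

lemma quadForm_neg (M : Matrix (Fin d) (Fin d) ℝ) (v : Fin d → ℝ) :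
    quadForm M (-v) = quadForm M v := by
  simp only [quadForm, mulVec_neg, dotProduct_neg, neg_dotProduct, neg_neg]

lemma quadForm_smul (M : Matrix (Fin d) (Fin d) ℝ) (c : ℝ) (v : Fin d → ℝ) :
    quadForm M (c • v) = c ^ 2 * quadForm M v := by
  simp only [quadForm, mulVec_smul, dotProduct_smul, smul_dotProduct, smul_eq_mul]
  ring

lemma Matrix.IsSymm.dotProduct_mulVec_comm {n R : Type*} [Fintype n] [CommSemiring R]
    {M : Matrix n n R} (hM : M.IsSymm) (u v : n → R) : u ⬝ᵥ M *ᵥ v = v ⬝ᵥ M *ᵥ u := by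
  conv_lhs => rw [dotProduct_mulVec, ← hM, vecMul_transpose]
  exact dotProduct_comm _ _

lemma quadForm_add_of_isSymm {M : Matrix (Fin d) (Fin d) ℝ} (hM : M.IsSymm) (u v : Fin d → ℝ) :
    quadForm M (u + v) = quadForm M u + 2 * (v ⬝ᵥ M *ᵥ u) + quadForm M v := by
  simp only [quadForm, mulVec_add, add_dotProduct, dotProduct_add]
  rw [hM.dotProduct_mulVec_comm u v]
  ring

lemma nonneg_of_forall_mul_add_mul_sq_nonneg {L K : ℝ}
    (h : ∀ θ : ℝ, 0 < θ → θ ≤ 1 → 0 ≤ θ * L + θ ^ 2 * K) : 0 ≤ L := by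
  have hlim : Filter.Tendsto (fun θ : ℝ => L + θ * K) (nhdsWithin 0 (Set.Ioi 0)) (nhds L) := by
    have : Filter.Tendsto (fun θ : ℝ => L + θ * K) (nhds 0) (nhds (L + 0 * K)) :=
      tendsto_const_nhds.add (Filter.tendsto_id.mul_const K)
    simpa using this.mono_left nhdsWithin_le_nhds
  refine ge_of_tendsto hlim ?_
  filter_upwards [Ioc_mem_nhdsGT one_pos] with θ ⟨hθ0, hθ1⟩
  refine nonneg_of_mul_nonneg_right ?_ hθ0
  linarith [h θ hθ0 hθ1]

lemma dotProduct_sub_nonneg_of_isMinOn {W : Set (Fin d → ℝ)} (hW : Convex ℝ W)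
    {Q : Matrix (Fin d) (Fin d) ℝ} (hQ : Q.IsSymm) {g c e : Fin d → ℝ} (he : e ∈ W)
    (hmin : IsMinOn (fun v => g ⬝ᵥ (v - c) + quadForm Q (v - c) / 2) W e)
    {v : Fin d → ℝ} (hv : v ∈ W) :
    0 ≤ (g + Q *ᵥ (e - c)) ⬝ᵥ (v - e) := by
  refine nonneg_of_forall_mul_add_mul_sq_nonneg (K := quadForm Q (v - e) / 2)
    fun θ hθ0 hθ1 => ?_
  have h := isMinOn_iff.1 hmin _ (hW.add_smul_sub_mem he hv ⟨hθ0.le, hθ1⟩)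
  rw [show e + θ • (v - e) - c = (e - c) + θ • (v - e) by abel,
    quadForm_add_of_isSymm hQ, quadForm_smul] at h
  simp only [dotProduct_add, add_dotProduct, dotProduct_smul, smul_dotProduct, smul_eq_mul,
    dotProduct_comm (Q *ᵥ (e - c))] at h ⊢
  linarith

end QuadForm

section Optimality

variable {d : ℕ} {W : Set (Fin d → ℝ)}

lemma quadForm_sub_le_of_mnorm_proj (hW : Convex ℝ W) {M : Matrix (Fin d) (Fin d) ℝ}
    (hM : M.IsSymm) (hM0 : ∀ v, 0 ≤ quadForm M v) {w p : Fin d → ℝ} (hp : p ∈ W)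
    (hproj : ∀ v ∈ W, mnorm M (p - w) ≤ mnorm M (v - w)) {v : Fin d → ℝ} (hv : v ∈ W) :
    quadForm M (v - p) ≤ quadForm M (v - w) := by
  have hmin : IsMinOn (fun v => (0 : Fin d → ℝ) ⬝ᵥ (v - w) + quadForm M (v - w) / 2) W p :=
    isMinOn_iff.2 fun u hu => by
      have := (Real.sqrt_le_sqrt_iff (hM0 _)).1 (hproj u hu)
      simp only [zero_dotProduct, zero_add]
      linarith
  have h := dotProduct_sub_nonneg_of_isMinOn hW hM hp hmin hv
  rw [zero_add, dotProduct_comm, ← hM.dotProduct_mulVec_comm] at h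
  rw [show v - w = (v - p) + (p - w) by abel, quadForm_add_of_isSymm hM]
  linarith [hM0 (p - w)]

lemma omd_update_optimality (hW : Convex ℝ W) {A P : Matrix (Fin d) (Fin d) ℝ} (hA : A.IsSymm)
    (hP : P.IsSymm) {g p e : Fin d → ℝ} {C η : ℝ} (hη : 0 < η) (he : e ∈ W)
    (hmin : ∀ v ∈ W,
      C + g ⬝ᵥ (e - p) + 1 / 2 * quadForm A (e - p) + 1 / (2 * η) * quadForm P (e - p)
        ≤ C + g ⬝ᵥ (v - p) + 1 / 2 * quadForm A (v - p) + 1 / (2 * η) * quadForm P (v - p))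
    {v : Fin d → ℝ} (hv : v ∈ W) :
    0 ≤ η * (g ⬝ᵥ (v - e) + (v - e) ⬝ᵥ A *ᵥ (e - p)) + (v - e) ⬝ᵥ P *ᵥ (e - p) := by
  have hobj (u : Fin d → ℝ) : g ⬝ᵥ (u - p) + quadForm (A + η⁻¹ • P) (u - p) / 2
      = g ⬝ᵥ (u - p) + 1 / 2 * quadForm A (u - p) + 1 / (2 * η) * quadForm P (u - p) := by
    rw [add_quadForm, smul_quadForm]
    field_simp
    ring
  have hmin' : IsMinOn (fun u => g ⬝ᵥ (u - p) + quadForm (A + η⁻¹ • P) (u - p) / 2) W e :=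
    isMinOn_iff.2 fun u hu => by rw [hobj, hobj]; linarith [hmin u hu]
  have h := dotProduct_sub_nonneg_of_isMinOn hW (hA.add (hP.smul η⁻¹)) he hmin' hv
  rw [dotProduct_comm] at h
  simp only [add_mulVec, smul_mulVec, dotProduct_add, dotProduct_smul, smul_eq_mul] at h
  have := mul_nonneg hη.le h
  rw [mul_add, mul_add, mul_inv_cancel_left₀ hη.ne', dotProduct_comm (v - e) g] at this
  linarith

end Optimality

section OMDStep

variable {d : ℕ} {ι : Type*}

lemma dotProduct_self_nonneg (v : Fin d → ℝ) : 0 ≤ v ⬝ᵥ v := by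
  simpa using dotProduct_self_star_nonneg v

lemma abs_dotProduct_le_l2norm_mul (x v : Fin d → ℝ) : |x ⬝ᵥ v| ≤ l2norm x * l2norm v := by
  rw [l2norm, l2norm, ← Real.sqrt_mul (dotProduct_self_nonneg x)]
  exact Real.abs_le_sqrt (by simpa [dotProduct, sq] using sum_mul_sq_le_sq_mul_sq univ x v)

lemma omd_step {S : Finset ι} {x : ι → Fin d → ℝ} {y : ι → ℝ} {y0 : ℝ}
    (hy : y0 + ∑ i ∈ S, y i = 1) (hx : ∀ i ∈ S, l2norm (x i) ≤ 1)
    {α η : ℝ} (hα : 0 < α) (hη : 1 + α ≤ η)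
    {W : Set (Fin d → ℝ)} (hW : Convex ℝ W) {wstar : Fin d → ℝ} (hwstar : wstar ∈ W)
    (hWα : ∀ i ∈ S, ∀ v ∈ W, |x i ⬝ᵥ (v - wstar)| ≤ α)
    {P : Matrix (Fin d) (Fin d) ℝ} (hP : P.IsSymm)
    (hPα : ∀ v, 12 * η * α * (v ⬝ᵥ v) ≤ quadForm P v)
    {w wp wnext : Fin d → ℝ} (hwp : wp ∈ W)
    (hproj : ∀ v ∈ W, mnorm P (wp - w) ≤ mnorm P (v - w)) (hnext : wnext ∈ W)
    (hupdate : ∀ v ∈ W,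
      mnlLoss S x y y0 wp + mnlGrad S x y wp ⬝ᵥ (wnext - wp)
          + 1 / 2 * quadForm (mnlHess S x wp) (wnext - wp) + 1 / (2 * η) * quadForm P (wnext - wp)
        ≤ mnlLoss S x y y0 wp + mnlGrad S x y wp ⬝ᵥ (v - wp)
          + 1 / 2 * quadForm (mnlHess S x wp) (v - wp) + 1 / (2 * η) * quadForm P (v - wp)) :
    quadForm (P + mnlHess S x wnext) (wnext - wstar)
      ≤ quadForm P (w - wstar) + 2 * η * (mnlLoss S x y y0 wstar - mnlLoss S x y y0 wnext)
        - 1 / 2 * quadForm P (wnext - wp) := by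
  have hη0 : 0 < η := by linarith
  have hP0 (v : Fin d → ℝ) : 0 ≤ quadForm P v :=
    (mul_nonneg (by positivity) (dotProduct_self_nonneg v)).trans (hPα v)
  have hloss : quadForm (mnlHess S x wnext) (wnext - wstar) ≤ 2 * η * (mnlLoss S x y y0 wstar
      - mnlLoss S x y y0 wnext + mnlGrad S x y wnext ⬝ᵥ (wnext - wstar)) := by
    have h := le_mnlLoss_add S x hy hα wnext (wstar - wnext) fun i hi => by
      rw [← neg_sub, dotProduct_neg, abs_neg]
      exact hWα i hi wnext hnext
    rw [add_sub_cancel, ← neg_sub, dotProduct_neg, quadForm_neg] at h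
    have hq := quadForm_mnlHess_nonneg S x wnext (wnext - wstar)
    have hη' : quadForm (mnlHess S x wnext) (wnext - wstar) / (2 * η)
        ≤ quadForm (mnlHess S x wnext) (wnext - wstar) / (2 + 2 * α) :=
      div_le_div_of_nonneg_left hq (by positivity) (by linarith)
    have := (div_le_iff₀ (by positivity)).1 (hη'.trans (by linarith : _ ≤ mnlLoss S x y y0 wstar
      - mnlLoss S x y y0 wnext + mnlGrad S x y wnext ⬝ᵥ (wnext - wstar)))
    linarith
  have hgrad : mnlGrad S x y wnext ⬝ᵥ (wnext - wstar)
      ≤ mnlGrad S x y wp ⬝ᵥ (wnext - wstar)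
        + (wnext - wstar) ⬝ᵥ mnlHess S x wp *ᵥ (wnext - wp)
        + 3 * α * ((wnext - wp) ⬝ᵥ (wnext - wp)) := by
    have h := mnlGrad_add_dotProduct_le S x y (Real.sqrt_nonneg _) hα.le wp (wnext - wp)
      (wnext - wstar) (fun i hi => (abs_dotProduct_le_l2norm_mul _ _).trans
        (mul_le_of_le_one_left (Real.sqrt_nonneg _) (hx i hi)))
      fun i hi => hWα i hi wnext hnext
    rwa [add_sub_cancel, Real.sq_sqrt (dotProduct_self_nonneg _)] at h
  have hopt := omd_update_optimality hW (mnlHess_isSymm S x wp) hP hη0 hnext hupdate hwstar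
  rw [← neg_sub wnext wstar] at hopt
  simp only [neg_dotProduct, dotProduct_neg] at hopt
  have hproj' := quadForm_sub_le_of_mnorm_proj hW hP hP0 hwp hproj hwstar
  rw [← neg_sub w wstar, quadForm_neg,
    show wstar - wp = (wnext - wp) + -(wnext - wstar) by abel, quadForm_add_of_isSymm hP,
    quadForm_neg, neg_dotProduct] at hproj'
  rw [add_quadForm]
  linarith [mul_le_mul_of_nonneg_left hgrad (by positivity : (0 : ℝ) ≤ 2 * η), hPα (wnext - wp)]

end OMDStep

section Rounds

variable {d : ℕ} {ι : Type*}

lemma add_sum_eq_one_of_oneHot {S : Finset ι} {y : ι → ℝ} {y0 : ℝ}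
    (h : (y0 = 1 ∧ ∀ i ∈ S, y i = 0) ∨
      (y0 = 0 ∧ ∃ i₀ ∈ S, y i₀ = 1 ∧ ∀ j ∈ S, j ≠ i₀ → y j = 0)) :
    y0 + ∑ i ∈ S, y i = 1 := by
  rcases h with ⟨h0, hy⟩ | ⟨h0, i₀, hi₀, hyi₀, hy⟩
  · rw [h0, sum_eq_zero hy, add_zero]
  · rw [h0, sum_eq_single_of_mem i₀ hi₀ hy, hyi₀, zero_add]

lemma quadForm_smul_one_sub_le {lam B : ℝ} (hlam : 0 ≤ lam) {a b : Fin d → ℝ}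
    (ha : l2norm a ≤ B) (hb : l2norm b ≤ B) :
    quadForm (lam • (1 : Matrix (Fin d) (Fin d) ℝ)) (a - b) ≤ 4 * B ^ 2 * lam := by
  rw [smul_quadForm, quadForm, one_mulVec, mul_comm]
  refine mul_le_mul_of_nonneg_right ?_ hlam
  have hpar : (a - b) ⬝ᵥ (a - b) + (a + b) ⬝ᵥ (a + b) = 2 * (a ⬝ᵥ a) + 2 * (b ⬝ᵥ b) := by
    simp only [sub_dotProduct, dotProduct_sub, add_dotProduct, dotProduct_add,
      dotProduct_comm b a]
    ring
  have := (Real.sqrt_le_iff.1 ha).2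
  have := (Real.sqrt_le_iff.1 hb).2
  linarith [dotProduct_self_nonneg (a + b)]

lemma sum_filter_lt_succ {M : Type*} [AddCommMonoid M] (Tset : Finset ℕ) (f : ℕ → M) (n : ℕ) :
    ∑ s ∈ Tset.filter (· < n + 1), f s
      = ∑ s ∈ Tset.filter (· < n), f s + if n ∈ Tset then f n else 0 := by
  split_ifs with hn
  · rw [add_comm _ (f n), ← sum_insert (by simp)]
    congr 1
    ext s
    simp only [mem_filter, mem_insert]
    grind
  · rw [add_zero]
    exact sum_congr (filter_congr fun s hs => by grind) fun _ _ => rfl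

lemma filter_lt_one_eq_empty {T : ℕ} {Tset : Finset ℕ} (hTset : Tset ⊆ Icc 1 T) :
    Tset.filter (· < 1) = ∅ :=
  filter_eq_empty_iff.2 fun s hs => by have := (mem_Icc.1 (hTset hs)).1; omega

lemma le_add_sum_filter_lt_of_step {T : ℕ} {Tset : Finset ℕ} (hTset : Tset ⊆ Icc 1 T)
    {E δ : ℕ → ℝ} (hupd : ∀ n ∈ Tset, E (n + 1) ≤ E n + δ n)
    (hskip : ∀ n ∈ Icc 1 T, n ∉ Tset → E (n + 1) = E n) {n : ℕ} (hn1 : 1 ≤ n)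
    (hnT : n ≤ T + 1) :
    E n ≤ E 1 + ∑ s ∈ Tset.filter (· < n), δ s := by
  induction n, hn1 using Nat.le_induction with
  | base => rw [filter_lt_one_eq_empty hTset, sum_empty, add_zero]
  | succ n hn ih =>
    have ih := ih (by omega)
    rw [sum_filter_lt_succ]
    split_ifs with h
    · linarith [hupd n h]
    · rw [hskip n (mem_Icc.2 ⟨hn, by omega⟩) h, add_zero]
      exact ih

variable {S : ℕ → Finset ι} {x : ℕ → ι → Fin d → ℝ} {w : ℕ → Fin d → ℝ}

lemma isSymm_smul_one_add_sum_mnlHess (lam : ℝ) (F : Finset ℕ) :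
    (lam • (1 : Matrix (Fin d) (Fin d) ℝ) + ∑ s ∈ F, mnlHess (S s) (x s) (w (s + 1))).IsSymm :=
  (isSymm_one.smul lam).add <| sum_induction _ IsSymm (fun _ _ => IsSymm.add) isSymm_zero
    fun _ _ => mnlHess_isSymm _ _ _

lemma le_quadForm_smul_one_add_sum_mnlHess (lam : ℝ) (F : Finset ℕ) (v : Fin d → ℝ) :
    lam * (v ⬝ᵥ v) ≤ quadForm
      (lam • (1 : Matrix (Fin d) (Fin d) ℝ) + ∑ s ∈ F, mnlHess (S s) (x s) (w (s + 1))) v := by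
  rw [add_quadForm, smul_quadForm, quadForm, one_mulVec]
  refine le_add_of_nonneg_right <| sum_induction _ (fun M => 0 ≤ quadForm M v)
    (fun M N hM hN => by rw [add_quadForm]; positivity) (by simp [quadForm])
    fun s _ => quadForm_mnlHess_nonneg _ _ _ _

end Rounds

theorem omd_estimation_error_bound_general {ι : Type*} (d T : ℕ) (B α : ℝ)
    (hα : 0 < α)
    (Tset : Finset ℕ) (hTset : Tset ⊆ Finset.Icc 1 T)
    (S : ℕ → Finset ι) (x : ℕ → ι → Fin d → ℝ)
    (hx : ∀ t ∈ Finset.Icc 1 T, ∀ i ∈ S t, l2norm (x t i) ≤ 1)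
    (y : ℕ → ι → ℝ) (y0 : ℕ → ℝ)
    (hy : ∀ t ∈ Finset.Icc 1 T,
      (y0 t = 1 ∧ ∀ i ∈ S t, y t i = 0) ∨
      (y0 t = 0 ∧ ∃ i₀ ∈ S t, y t i₀ = 1 ∧ ∀ j ∈ S t, j ≠ i₀ → y t j = 0))
    (wstar : Fin d → ℝ) (hwstar : l2norm wstar ≤ B)
    (η lam : ℝ) (hη : η = 1 + (3 * Real.sqrt 2 / 2) * α)
    (hlam : 12 * Real.sqrt 2 * η * α ≤ lam)
    (Wt : ℕ → Set (Fin d → ℝ))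
    (hWt : ∀ t ∈ Tset, IsCompact (Wt t) ∧ Convex ℝ (Wt t) ∧ wstar ∈ Wt t ∧
      ∀ i ∈ S t, ∀ v ∈ Wt t, |x t i ⬝ᵥ (v - wstar)| ≤ α)
    (w wp : ℕ → Fin d → ℝ)
    (H : ℕ → Matrix (Fin d) (Fin d) ℝ)
    (hH : ∀ t, H t = lam • (1 : Matrix (Fin d) (Fin d) ℝ)
      + ∑ s ∈ Tset.filter (fun s => s < t), mnlHess (S s) (x s) (w (s + 1)))
    (hwinit : l2norm (w 1) ≤ B)
    -- `w_t' = argmin_{v ∈ 𝒲_t} ‖v − w_t‖_{H_t}` on update rounds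
    (hproj : ∀ t ∈ Tset, wp t ∈ Wt t ∧
      ∀ v ∈ Wt t, mnorm (H t) (wp t - w t) ≤ mnorm (H t) (v - w t))
    -- `w_{t+1} = argmin_{v ∈ 𝒲_t} [ℓ̃_t(v) + (1/(2η))‖v − w_t'‖²_{H_t}]` on update rounds
    (hupdate : ∀ t ∈ Tset, w (t + 1) ∈ Wt t ∧
      ∀ v ∈ Wt t,
        mnlLoss (S t) (x t) (y t) (y0 t) (wp t)
            + mnlGrad (S t) (x t) (y t) (wp t) ⬝ᵥ (w (t + 1) - wp t)
            + (1 / 2) * quadForm (mnlHess (S t) (x t) (wp t)) (w (t + 1) - wp t)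
            + (1 / (2 * η)) * quadForm (H t) (w (t + 1) - wp t)
          ≤ mnlLoss (S t) (x t) (y t) (y0 t) (wp t)
            + mnlGrad (S t) (x t) (y t) (wp t) ⬝ᵥ (v - wp t)
            + (1 / 2) * quadForm (mnlHess (S t) (x t) (wp t)) (v - wp t)
            + (1 / (2 * η)) * quadForm (H t) (v - wp t))
    -- `w_{t+1} = w_t` on non-update rounds
    (hnoupdate : ∀ t ∈ Finset.Icc 1 T, t ∉ Tset → w (t + 1) = w t) :
    ∀ t ∈ Tset,
      quadForm (H (t + 1)) (w (t + 1) - wstar)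
        ≤ 2 * η * ∑ s ∈ Tset.filter (fun s => s ≤ t),
            (mnlLoss (S s) (x s) (y s) (y0 s) wstar
              - mnlLoss (S s) (x s) (y s) (y0 s) (w (s + 1)))
          + 4 * B ^ 2 * lam
          - (1 / 2) * ∑ s ∈ Tset.filter (fun s => s ≤ t),
              quadForm (H s) (w (s + 1) - wp s) := by
  have hη1 : 1 + α ≤ η := by rw [hη]; nlinarith [Real.one_lt_sqrt_two]
  have hlam' : 12 * η * α ≤ lam := by
    nlinarith [Real.one_lt_sqrt_two, mul_pos (by linarith : 0 < η) hα]
  have hHsucc (n : ℕ) :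
      H (n + 1) = H n + if n ∈ Tset then mnlHess (S n) (x n) (w (n + 1)) else 0 := by
    rw [hH, hH, sum_filter_lt_succ, add_assoc]
  have hstep (n : ℕ) (hn : n ∈ Tset) : quadForm (H (n + 1)) (w (n + 1) - wstar)
      ≤ quadForm (H n) (w n - wstar) + (2 * η * (mnlLoss (S n) (x n) (y n) (y0 n) wstar
        - mnlLoss (S n) (x n) (y n) (y0 n) (w (n + 1)))
        - 1 / 2 * quadForm (H n) (w (n + 1) - wp n)) := by
    obtain ⟨-, hWconv, hWs, hWα⟩ := hWt n hn
    rw [hHsucc, if_pos hn, add_sub_assoc']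
    refine omd_step (add_sum_eq_one_of_oneHot (hy n (hTset hn))) (hx n (hTset hn)) hα hη1
      hWconv hWs hWα (by rw [hH]; exact isSymm_smul_one_add_sum_mnlHess lam _)
      (fun v => (mul_le_mul_of_nonneg_right hlam' (dotProduct_self_nonneg v)).trans
        (by rw [hH]; exact le_quadForm_smul_one_add_sum_mnlHess lam _ v))
      (hproj n hn).1 (hproj n hn).2 (hupdate n hn).1 (hupdate n hn).2
  have hskip (n : ℕ) (hn : n ∈ Finset.Icc 1 T) (hnT : n ∉ Tset) :
      quadForm (H (n + 1)) (w (n + 1) - wstar) = quadForm (H n) (w n - wstar) := by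
    rw [hHsucc, if_neg hnT, add_zero, hnoupdate n hn hnT]
  have hinit : quadForm (H 1) (w 1 - wstar) ≤ 4 * B ^ 2 * lam := by
    rw [hH, filter_lt_one_eq_empty hTset, sum_empty, add_zero]
    exact quadForm_smul_one_sub_le ((mul_nonneg (by linarith) hα.le).trans hlam') hwinit hwstar
  intro t ht
  have h := le_add_sum_filter_lt_of_step hTset (E := fun n => quadForm (H n) (w n - wstar))
    hstep hskip (n := t + 1) (by omega)
    (by have := (mem_Icc.1 (hTset ht)).2; omega)
  simp only [Nat.lt_succ_iff, sum_sub_distrib, ← mul_sum] at h ⊢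
  linarith

/-- **Lemma C.1.** Deterministic bound on the online-mirror-descent
estimation error for MNL models: for every update round `t ∈ 𝒯`, with
`𝒯_{t+1} = {s ∈ 𝒯 : s ≤ t}`,
`‖w_{t+1} − w*‖²_{H_{t+1}} ≤ 2η Σ_{s∈𝒯_{t+1}} (ℓ_s(w*) − ℓ_s(w_{s+1})) + 4B²λ
  − (1/2) Σ_{s∈𝒯_{t+1}} ‖w_{s+1} − w_s'‖²_{H_s}`. -/
theorem omd_estimation_error_bound {ι : Type*} (d T : ℕ) (B α : ℝ)
    (hB : 0 < B) (hα : 0 < α)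
    (Tset : Finset ℕ) (hTset : Tset ⊆ Finset.Icc 1 T)
    (S : ℕ → Finset ι) (x : ℕ → ι → Fin d → ℝ)
    (hx : ∀ t ∈ Finset.Icc 1 T, ∀ i ∈ S t, l2norm (x t i) ≤ 1)
    (y : ℕ → ι → ℝ) (y0 : ℕ → ℝ)
    (hy : ∀ t ∈ Finset.Icc 1 T,
      (y0 t = 1 ∧ ∀ i ∈ S t, y t i = 0) ∨
      (y0 t = 0 ∧ ∃ i₀ ∈ S t, y t i₀ = 1 ∧ ∀ j ∈ S t, j ≠ i₀ → y t j = 0))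
    (wstar : Fin d → ℝ) (hwstar : l2norm wstar ≤ B)
    (η lam : ℝ) (hη : η = 1 + (3 * Real.sqrt 2 / 2) * α)
    (hlam : 12 * Real.sqrt 2 * η * α ≤ lam)
    (Wt : ℕ → Set (Fin d → ℝ))
    (hWt : ∀ t ∈ Tset, IsCompact (Wt t) ∧ Convex ℝ (Wt t) ∧ wstar ∈ Wt t ∧
      ∀ i ∈ S t, ∀ v ∈ Wt t, |x t i ⬝ᵥ (v - wstar)| ≤ α)
    (w wp : ℕ → Fin d → ℝ)
    (H : ℕ → Matrix (Fin d) (Fin d) ℝ)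
    (hH : ∀ t, H t = lam • (1 : Matrix (Fin d) (Fin d) ℝ)
      + ∑ s ∈ Tset.filter (fun s => s < t), mnlHess (S s) (x s) (w (s + 1)))
    (hwinit : l2norm (w 1) ≤ B)
    -- `w_t' = argmin_{v ∈ 𝒲_t} ‖v − w_t‖_{H_t}` on update rounds
    (hproj : ∀ t ∈ Tset, wp t ∈ Wt t ∧
      ∀ v ∈ Wt t, mnorm (H t) (wp t - w t) ≤ mnorm (H t) (v - w t))
    -- `w_{t+1} = argmin_{v ∈ 𝒲_t} [ℓ̃_t(v) + (1/(2η))‖v − w_t'‖²_{H_t}]` on update rounds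
    (hupdate : ∀ t ∈ Tset, w (t + 1) ∈ Wt t ∧
      ∀ v ∈ Wt t,
        mnlLoss (S t) (x t) (y t) (y0 t) (wp t)
            + mnlGrad (S t) (x t) (y t) (wp t) ⬝ᵥ (w (t + 1) - wp t)
            + (1 / 2) * quadForm (mnlHess (S t) (x t) (wp t)) (w (t + 1) - wp t)
            + (1 / (2 * η)) * quadForm (H t) (w (t + 1) - wp t)
          ≤ mnlLoss (S t) (x t) (y t) (y0 t) (wp t)
            + mnlGrad (S t) (x t) (y t) (wp t) ⬝ᵥ (v - wp t)
            + (1 / 2) * quadForm (mnlHess (S t) (x t) (wp t)) (v - wp t)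
            + (1 / (2 * η)) * quadForm (H t) (v - wp t))
    -- `w_{t+1} = w_t` on non-update rounds
    (hnoupdate : ∀ t ∈ Finset.Icc 1 T, t ∉ Tset → w (t + 1) = w t) :
    ∀ t ∈ Tset,
      quadForm (H (t + 1)) (w (t + 1) - wstar)
        ≤ 2 * η * ∑ s ∈ Tset.filter (fun s => s ≤ t),
            (mnlLoss (S s) (x s) (y s) (y0 s) wstar
              - mnlLoss (S s) (x s) (y s) (y0 s) (w (s + 1)))
          + 4 * B ^ 2 * lam
          - (1 / 2) * ∑ s ∈ Tset.filter (fun s => s ≤ t),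
              quadForm (H s) (w (s + 1) - wp s) :=
  omd_estimation_error_bound_general d T B α hα Tset hTset S x hx y y0 hy wstar hwstar η lam hη hlam
    Wt hWt w wp H hH hwinit hproj hupdate hnoupdate
end

section
/- Let K ≥ 1 and y ∈ ℝ^K, and define the multinomial logistic loss ℓ̄ : ℝ^K → ℝ by ℓ̄(z) = −⟨y, z⟩ + log(1 + Σ_{i=1}^K exp(z_i)). Then ℓ̄ is 3√2-self-concordant-like with respect to the ℓ∞-norm: for every a, b ∈ ℝ^K, the function φ(s) := ℓ̄(a + s b) satisfies |φ'''(s)| ≤ 3√2 ‖b‖_∞ φ''(s) for all s ∈ ℝ. -/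
/-!
`ℓ̄` is itself a log-partition function: with `z₀ := 0`,
`ℓ̄(z) = log ∑_{j=0}^K exp (z_j - ⟨y, z⟩)`. Along a line the exponents are `α_j + s β_j`, and the
derivatives of `log ∑ exp (α_j + s β_j)` are the cumulants of `β` under the softmax weights:
`φ''` is the variance and `φ'''` the third central moment. Every `β_j` lies within
`D := max_{j,k} |β_j - β_k|` of the mean, so `|φ'''| ≤ D φ''`, and `D ≤ 2 ‖b‖_∞ ≤ 3√2 ‖b‖_∞`
because the `β_j` are the numbers `0, b_1, …, b_K` shifted by `⟨y, b⟩`.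
-/

/-- The multinomial logistic loss on `ℝ^K` with one-hot (or arbitrary) response `y`:
`ℓ̄(z) = -⟨y, z⟩ + log(1 + Σᵢ exp zᵢ)`. -/
noncomputable def mnlLossZ (K : ℕ) (y : Fin K → ℝ) (z : Fin K → ℝ) : ℝ :=
  -(∑ i, y i * z i) + Real.log (1 + ∑ i, Real.exp (z i))

open Real Finset

section Moments

variable {ι : Type*} [Fintype ι]

def weightedMoment (q c : ι → ℝ) (k : ℕ) : ℝ := ∑ i, q i * c i ^ k

variable {q c : ι → ℝ}

theorem sum_mul_sub_pow_two (x y : ℝ) :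
    ∑ i, q i * (x * c i - y) ^ 2 =
      x ^ 2 * weightedMoment q c 2 - 2 * x * y * weightedMoment q c 1
        + y ^ 2 * weightedMoment q c 0 := by
  simp only [weightedMoment, mul_sum, ← sum_sub_distrib, ← sum_add_distrib]
  exact sum_congr rfl fun i _ => by ring

theorem sum_mul_sub_pow_three (x y : ℝ) :
    ∑ i, q i * (x * c i - y) ^ 3 =
      x ^ 3 * weightedMoment q c 3 - 3 * x ^ 2 * y * weightedMoment q c 2
        + 3 * x * y ^ 2 * weightedMoment q c 1 - y ^ 3 * weightedMoment q c 0 := by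
  simp only [weightedMoment, mul_sum, ← sum_sub_distrib, ← sum_add_distrib]
  exact sum_congr rfl fun i _ => by ring

theorem abs_weightedMoment_centered_le (hq : ∀ i, 0 ≤ q i) {D : ℝ}
    (hc : ∀ i j, |c i - c j| ≤ D) (i : ι) :
    |weightedMoment q c 0 * c i - weightedMoment q c 1| ≤ D * weightedMoment q c 0 := by
  have h : weightedMoment q c 0 * c i - weightedMoment q c 1 = ∑ j, q j * (c i - c j) := by
    simp only [weightedMoment, sum_mul, ← sum_sub_distrib]
    exact sum_congr rfl fun j _ => by ring
  rw [h, weightedMoment, mul_sum]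
  refine (abs_sum_le_sum_abs _ _).trans (sum_le_sum fun j _ => ?_)
  rw [abs_mul, abs_of_nonneg (hq j), pow_zero, mul_one, mul_comm D]
  exact mul_le_mul_of_nonneg_left (hc i j) (hq j)

/-- With `m_k` the moments and `μ = m₁ / m₀`, the left side is `m₀³` times the third central
moment `∑ q (c - μ)³ / m₀` and the right side `D m₀³` times the variance. -/
theorem abs_third_cumulant_le (hq : ∀ i, 0 ≤ q i) (hm : 0 < weightedMoment q c 0) {D : ℝ}
    (hc : ∀ i j, |c i - c j| ≤ D) :
    |weightedMoment q c 0 ^ 2 * weightedMoment q c 3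
        - 3 * weightedMoment q c 0 * weightedMoment q c 1 * weightedMoment q c 2
        + 2 * weightedMoment q c 1 ^ 3|
      ≤ D * weightedMoment q c 0 * (weightedMoment q c 0 * weightedMoment q c 2
        - weightedMoment q c 1 ^ 2) := by
  have h3 := sum_mul_sub_pow_three (q := q) (c := c) (weightedMoment q c 0) (weightedMoment q c 1)
  have h2 := sum_mul_sub_pow_two (q := q) (c := c) (weightedMoment q c 0) (weightedMoment q c 1)
  set m₀ := weightedMoment q c 0
  set m₁ := weightedMoment q c 1
  set m₂ := weightedMoment q c 2
  set m₃ := weightedMoment q c 3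
  have hterm : ∀ i, |q i * (m₀ * c i - m₁) ^ 3| ≤ D * m₀ * (q i * (m₀ * c i - m₁) ^ 2) := by
    intro i
    rw [abs_mul, abs_of_nonneg (hq i), abs_pow, pow_succ, ← sq_abs (m₀ * c i - m₁)]
    have := abs_weightedMoment_centered_le hq hc i
    have : 0 ≤ q i * |m₀ * c i - m₁| ^ 2 := by have := hq i; positivity
    nlinarith
  suffices m₀ * |m₀ ^ 2 * m₃ - 3 * m₀ * m₁ * m₂ + 2 * m₁ ^ 3|
      ≤ m₀ * (D * m₀ * (m₀ * m₂ - m₁ ^ 2)) from le_of_mul_le_mul_left this hm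
  calc m₀ * |m₀ ^ 2 * m₃ - 3 * m₀ * m₁ * m₂ + 2 * m₁ ^ 3|
      = |m₀ * (m₀ ^ 2 * m₃ - 3 * m₀ * m₁ * m₂ + 2 * m₁ ^ 3)| := by rw [abs_mul, abs_of_pos hm]
    _ = |∑ i, q i * (m₀ * c i - m₁) ^ 3| := by rw [h3]; ring_nf
    _ ≤ ∑ i, D * m₀ * (q i * (m₀ * c i - m₁) ^ 2) :=
        (abs_sum_le_sum_abs _ _).trans (sum_le_sum fun i _ => hterm i)
    _ = m₀ * (D * m₀ * (m₀ * m₂ - m₁ ^ 2)) := by rw [← mul_sum, h2]; ring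

end Moments

section LogPartition

variable {ι : Type*} [Fintype ι] (α β : ι → ℝ)

noncomputable def expMoment (k : ℕ) (t : ℝ) : ℝ :=
  weightedMoment (fun i => exp (α i + t * β i)) β k

noncomputable def logPartition (t : ℝ) : ℝ := log (∑ i, exp (α i + t * β i))

theorem expMoment_zero_pos [Nonempty ι] (t : ℝ) : 0 < expMoment α β 0 t :=
  sum_pos (fun i _ => by simp [exp_pos]) univ_nonempty

theorem hasDerivAt_expMoment (k : ℕ) (t : ℝ) :
    HasDerivAt (expMoment α β k) (expMoment α β (k + 1) t) t := by
  refine HasDerivAt.fun_sum fun i _ => ?_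
  have hline : HasDerivAt (fun s => α i + s * β i) (β i) t := by
    simpa using (hasDerivAt_mul_const (β i)).const_add (α i)
  exact (hline.exp.mul_const (β i ^ k)).congr_deriv (by ring)

theorem hasDerivAt_logPartition [Nonempty ι] (t : ℝ) :
    HasDerivAt (logPartition α β) (expMoment α β 1 t / expMoment α β 0 t) t := by
  have h := (hasDerivAt_expMoment α β 0 t).log (expMoment_zero_pos α β t).ne'
  convert h using 2 with s
  simp [logPartition, expMoment, weightedMoment]

theorem hasDerivAt_expMoment_mean [Nonempty ι] (t : ℝ) :
    HasDerivAt (fun s => expMoment α β 1 s / expMoment α β 0 s)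
      ((expMoment α β 0 t * expMoment α β 2 t - expMoment α β 1 t ^ 2)
        / expMoment α β 0 t ^ 2) t :=
  ((hasDerivAt_expMoment α β 1 t).div (hasDerivAt_expMoment α β 0 t)
    (expMoment_zero_pos α β t).ne').congr_deriv (by ring)

theorem hasDerivAt_expMoment_variance [Nonempty ι] (t : ℝ) :
    HasDerivAt (fun s => (expMoment α β 0 s * expMoment α β 2 s - expMoment α β 1 s ^ 2)
        / expMoment α β 0 s ^ 2)
      ((expMoment α β 0 t ^ 2 * expMoment α β 3 t
        - 3 * expMoment α β 0 t * expMoment α β 1 t * expMoment α β 2 t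
        + 2 * expMoment α β 1 t ^ 3) / expMoment α β 0 t ^ 3) t := by
  have hm := (expMoment_zero_pos α β t).ne'
  have h₀ := hasDerivAt_expMoment α β 0 t
  have h₁ := hasDerivAt_expMoment α β 1 t
  have h₂ := hasDerivAt_expMoment α β 2 t
  refine (((h₀.mul h₂).sub (h₁.pow 2)).div (h₀.pow 2) (pow_ne_zero 2 hm)).congr_deriv ?_
  simp only [Pi.mul_apply, Pi.sub_apply, Pi.pow_apply]
  field_simp
  ring

theorem iteratedDeriv_two_logPartition [Nonempty ι] :
    iteratedDeriv 2 (logPartition α β) = fun t =>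
      (expMoment α β 0 t * expMoment α β 2 t - expMoment α β 1 t ^ 2)
        / expMoment α β 0 t ^ 2 := by
  have h₁ : deriv (logPartition α β) = fun s => expMoment α β 1 s / expMoment α β 0 s :=
    funext fun t => (hasDerivAt_logPartition α β t).deriv
  rw [iteratedDeriv_succ, iteratedDeriv_one, h₁]
  exact funext fun t => (hasDerivAt_expMoment_mean α β t).deriv

theorem iteratedDeriv_three_logPartition [Nonempty ι] (t : ℝ) :
    iteratedDeriv 3 (logPartition α β) t =
      (expMoment α β 0 t ^ 2 * expMoment α β 3 t
        - 3 * expMoment α β 0 t * expMoment α β 1 t * expMoment α β 2 t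
        + 2 * expMoment α β 1 t ^ 3) / expMoment α β 0 t ^ 3 := by
  rw [iteratedDeriv_succ, iteratedDeriv_two_logPartition]
  exact (hasDerivAt_expMoment_variance α β t).deriv

theorem abs_iteratedDeriv_three_logPartition_le [Nonempty ι] {D : ℝ}
    (hβ : ∀ i j, |β i - β j| ≤ D) (t : ℝ) :
    |iteratedDeriv 3 (logPartition α β) t| ≤ D * iteratedDeriv 2 (logPartition α β) t := by
  have hm := expMoment_zero_pos α β t
  have key : |expMoment α β 0 t ^ 2 * expMoment α β 3 t
        - 3 * expMoment α β 0 t * expMoment α β 1 t * expMoment α β 2 t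
        + 2 * expMoment α β 1 t ^ 3|
      ≤ D * expMoment α β 0 t * (expMoment α β 0 t * expMoment α β 2 t
        - expMoment α β 1 t ^ 2) :=
    abs_third_cumulant_le (fun i => (exp_pos _).le) hm hβ
  rw [iteratedDeriv_three_logPartition, iteratedDeriv_two_logPartition, abs_div,
    abs_of_pos (pow_pos hm 3)]
  calc _ ≤ D * expMoment α β 0 t * (expMoment α β 0 t * expMoment α β 2 t
        - expMoment α β 1 t ^ 2) / expMoment α β 0 t ^ 3 := by gcongr
    _ = _ := by field_simp

end LogPartition

theorem mnlLossZ_eq_log_sum_exp (K : ℕ) (y z : Fin K → ℝ) :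
    mnlLossZ K y z = log (∑ j : Option (Fin K), exp (j.elim 0 z - ∑ i, y i * z i)) := by
  have h : ∑ j : Option (Fin K), exp (j.elim 0 z - ∑ i, y i * z i)
      = exp (-∑ i, y i * z i) * (1 + ∑ i, exp (z i)) := by
    simp only [Fintype.sum_option, Option.elim_none, Option.elim_some, mul_add, mul_one,
      mul_sum, ← exp_add, zero_sub]
    congr 1
    exact sum_congr rfl fun i _ => by ring_nf
  rw [h, log_mul (exp_ne_zero _) (by positivity), log_exp, mnlLossZ]

theorem mnlLossZ_line_eq_logPartition (K : ℕ) (y a b : Fin K → ℝ) :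
    (fun t : ℝ => mnlLossZ K y (a + t • b)) =
      logPartition (fun j : Option (Fin K) => j.elim 0 a - ∑ i, y i * a i)
        (fun j : Option (Fin K) => j.elim 0 b - ∑ i, y i * b i) := by
  funext t
  rw [mnlLossZ_eq_log_sum_exp, logPartition]
  congr 1
  refine sum_congr rfl fun j _ => congrArg exp ?_
  cases j <;>
  · simp only [Option.elim_none, Option.elim_some, Pi.add_apply, Pi.smul_apply, smul_eq_mul,
      mul_add, mul_sub, sum_add_distrib, mul_sum, mul_left_comm t]
    ring

theorem abs_option_elim_le_norm {ι : Type*} [Fintype ι] (b : ι → ℝ) (j : Option ι) :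
    |j.elim 0 b| ≤ ‖b‖ := by
  cases j with
  | none => simp
  | some i => simpa using norm_le_pi_norm b i

theorem mnl_loss_self_concordant_like_general (K : ℕ) (y : Fin K → ℝ)
    (a b : Fin K → ℝ) (s : ℝ) :
    |iteratedDeriv 3 (fun t : ℝ => mnlLossZ K y (a + t • b)) s|
      ≤ 3 * Real.sqrt 2 * ‖b‖ * iteratedDeriv 2 (fun t : ℝ => mnlLossZ K y (a + t • b)) s := by
  have hspread : ∀ j k : Option (Fin K),
      |(j.elim 0 b - ∑ i, y i * b i) - (k.elim 0 b - ∑ i, y i * b i)| ≤ 2 * ‖b‖ := fun j k => by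
    rw [sub_sub_sub_cancel_right, two_mul]
    exact (abs_sub _ _).trans (add_le_add (abs_option_elim_le_norm b j) (abs_option_elim_le_norm b k))
  rw [mnlLossZ_line_eq_logPartition]
  have h := abs_iteratedDeriv_three_logPartition_le
    (fun j : Option (Fin K) => j.elim 0 a - ∑ i, y i * a i) _ hspread s
  have hnonneg := (abs_nonneg _).trans h
  have hsqrt : (2 : ℝ) ≤ 3 * √2 := by nlinarith [one_le_sqrt.mpr (by norm_num : (1 : ℝ) ≤ 2)]
  nlinarith

/-- **Proposition B.2.** The multinomial logistic loss is
`3√2`-self-concordant-like with respect to the `ℓ∞`-norm: for all `a, b ∈ ℝ^K`,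
the function `φ(s) = ℓ̄(a + s b)` satisfies `|φ'''(s)| ≤ 3√2 ‖b‖_∞ φ''(s)` for all `s`.
(The norm on `Fin K → ℝ` is the sup-norm.) -/
theorem mnl_loss_self_concordant_like (K : ℕ) (hK : 1 ≤ K) (y : Fin K → ℝ)
    (a b : Fin K → ℝ) (s : ℝ) :
    |iteratedDeriv 3 (fun t : ℝ => mnlLossZ K y (a + t • b)) s|
      ≤ 3 * Real.sqrt 2 * ‖b‖ * iteratedDeriv 2 (fun t : ℝ => mnlLossZ K y (a + t • b)) s :=
  mnl_loss_self_concordant_like_general K y a b s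
end

section
/- Let K ≥ 1 and f : ℝ^K → ℝ, f(z) = log(1 + Σ_{i=1}^K exp(z_i)). For x, u ∈ ℝ^K let D³f(x)[u] denote the directional derivative of the Hessian, i.e., the K×K matrix d/ds|_{s=0} ∇²f(x + s u), and write D³f(x)[u₁, u₂, u₂] = u₂ᵀ (D³f(x)[u₁]) u₂. Then for all x, u₁, u₂ ∈ ℝ^K: |D³f(x)[u₁, u₂, u₂]| ≤ 3√2 ‖u₁‖_∞ · u₂ᵀ ∇²f(x) u₂. -/
open Matrix

/-- Softmax probabilities: `σᵢ(z) = exp(zᵢ)/(1 + Σₖ exp(zₖ))`. -/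
noncomputable def softmaxP (K : ℕ) (z : Fin K → ℝ) (i : Fin K) : ℝ :=
  Real.exp (z i) / (1 + ∑ k, Real.exp (z k))

/-- Hessian of `f(z) = log(1 + Σᵢ exp zᵢ)`:
`∇²f(z) = diag(σ(z)) - σ(z)σ(z)ᵀ`. -/
noncomputable def lseHess (K : ℕ) (z : Fin K → ℝ) : Matrix (Fin K) (Fin K) ℝ :=
  Matrix.diagonal (softmaxP K z) - Matrix.vecMulVec (softmaxP K z) (softmaxP K z)

/-- `D³f(x)[u]`: the `K×K` matrix `d/ds|₀ ∇²f(x + s u)` (entrywise derivative). -/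
noncomputable def lseD3 (K : ℕ) (x u : Fin K → ℝ) : Matrix (Fin K) (Fin K) ℝ :=
  fun i j => deriv (fun s : ℝ => lseHess K (x + s • u) i j) 0
/-!
Let `p = σ(x)` and complete it to a probability distribution on `K + 1` points by putting the
residual mass `1 - ∑ pᵢ` on an extra point where every vector is taken to vanish. Then
`u₂ᵀ ∇²f(x) u₂` is the variance of `u₂` under this distribution and `D³f(x)[u₁, u₂, u₂]` is the
mixed central moment `E[(u₁ - E u₁)(u₂ - E u₂)²]`. As `|u₁ - E u₁| ≤ 2 ‖u₁‖_∞` pointwise, the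
latter is at most `2 ‖u₁‖_∞` times the variance, and `2 ≤ 3√2`.
-/

open Finset

section QuadraticForm

variable {ι : Type*} [Fintype ι]

lemma dotProduct_diagonal_mulVec_self [DecidableEq ι] (w v : ι → ℝ) :
    v ⬝ᵥ diagonal w *ᵥ v = ∑ i, w i * v i ^ 2 := by
  simp only [dotProduct, mulVec_diagonal]
  exact sum_congr rfl fun i _ => by ring

lemma dotProduct_vecMulVec_mulVec_self (a c v : ι → ℝ) :
    v ⬝ᵥ vecMulVec a c *ᵥ v = (a ⬝ᵥ v) * (c ⬝ᵥ v) := by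
  rw [vecMulVec_mulVec, op_smul_eq_smul, dotProduct_smul, smul_eq_mul, dotProduct_comm v a,
    mul_comm]

lemma sum_mul_sub_sq (q v : ι → ℝ) (b : ℝ) :
    ∑ i, q i * (v i - b) ^ 2 = ∑ i, q i * v i ^ 2 - 2 * b * (q ⬝ᵥ v) + (∑ i, q i) * b ^ 2 := by
  simp only [dotProduct, mul_sum, sum_mul, ← sum_sub_distrib, ← sum_add_distrib]
  exact sum_congr rfl fun i _ => by ring

lemma abs_sum_mul_le_of_abs_le {w c : ι → ℝ} {C : ℝ} (hw : ∀ i, 0 ≤ w i)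
    (hc : ∀ i, |c i| ≤ C) : |∑ i, w i * c i| ≤ C * ∑ i, w i := by
  rw [mul_sum]
  refine (abs_sum_le_sum_abs _ _).trans (sum_le_sum fun i _ => ?_)
  rw [abs_mul, abs_of_nonneg (hw i), mul_comm]
  exact mul_le_mul_of_nonneg_right (hc i) (hw i)

lemma abs_mixedCentralMoment_le {p : ι → ℝ} (hp : ∀ i, 0 ≤ p i) (hP : ∑ i, p i ≤ 1)
    (u v : ι → ℝ) :
    |∑ i, p i * (u i - p ⬝ᵥ u) * (v i - p ⬝ᵥ v) ^ 2 - (1 - ∑ i, p i) * (p ⬝ᵥ u) * (p ⬝ᵥ v) ^ 2|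
      ≤ 2 * ‖u‖ * (∑ i, p i * (v i - p ⬝ᵥ v) ^ 2 + (1 - ∑ i, p i) * (p ⬝ᵥ v) ^ 2) := by
  set m := p ⬝ᵥ u
  set b := p ⬝ᵥ v
  have hu (i : ι) : |u i| ≤ ‖u‖ := by simpa using norm_le_pi_norm u i
  have hm : |m| ≤ ‖u‖ := calc
    |m| ≤ ‖u‖ * ∑ i, p i := abs_sum_mul_le_of_abs_le hp hu
    _ ≤ ‖u‖ := mul_le_of_le_one_right (norm_nonneg u) hP
  have hcentered (i : ι) : |u i - m| ≤ 2 * ‖u‖ := by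
    linarith [abs_sub (u i) m, hu i]
  have hsum : |∑ i, p i * (u i - m) * (v i - b) ^ 2| ≤ 2 * ‖u‖ * ∑ i, p i * (v i - b) ^ 2 := by
    have h := abs_sum_mul_le_of_abs_le (w := fun i => p i * (v i - b) ^ 2)
      (fun i => mul_nonneg (hp i) (sq_nonneg _)) hcentered
    simpa only [mul_right_comm] using h
  have hresidual : |(1 - ∑ i, p i) * m * b ^ 2| ≤ 2 * ‖u‖ * ((1 - ∑ i, p i) * b ^ 2) := by
    have hmass : 0 ≤ (1 - ∑ i, p i) * b ^ 2 := mul_nonneg (sub_nonneg.2 hP) (sq_nonneg b)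
    rw [mul_right_comm, abs_mul, abs_of_nonneg hmass, mul_comm]
    exact mul_le_mul_of_nonneg_right (by linarith [norm_nonneg u]) hmass
  calc _ ≤ _ := abs_sub _ _
    _ ≤ _ := add_le_add hsum hresidual
    _ = _ := by ring

end QuadraticForm

section Softmax

variable {K : ℕ}

lemma softmaxP_nonneg (z : Fin K → ℝ) (i : Fin K) : 0 ≤ softmaxP K z i := by
  unfold softmaxP; positivity

lemma sum_softmaxP_le_one (z : Fin K → ℝ) : ∑ i, softmaxP K z i ≤ 1 := by
  simp only [softmaxP, ← sum_div]
  rw [div_le_one (by positivity)]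
  linarith

lemma hasDerivAt_softmaxP_line (x u : Fin K → ℝ) (i : Fin K) :
    HasDerivAt (fun s : ℝ => softmaxP K (x + s • u) i)
      (softmaxP K x i * (u i - softmaxP K x ⬝ᵥ u)) 0 := by
  have hexp (j : Fin K) : HasDerivAt (fun s : ℝ => Real.exp (x j + s * u j))
      (Real.exp (x j) * u j) 0 := by
    simpa using ((hasDerivAt_mul_const (x := (0 : ℝ)) (u j)).const_add (x j)).exp
  have hZ := (HasDerivAt.fun_sum (u := univ) fun j _ => hexp j).const_add 1
  have hZ0 : (1 : ℝ) + ∑ k, Real.exp (x k) ≠ 0 := by positivity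
  have hline : (fun s : ℝ => softmaxP K (x + s • u) i)
      = fun s => Real.exp (x i + s * u i) / (1 + ∑ k, Real.exp (x k + s * u k)) := by
    ext s
    simp [softmaxP]
  rw [hline]
  refine ((hexp i).fun_div hZ (by simpa using hZ0)).congr_deriv ?_
  simp only [softmaxP, dotProduct, zero_mul, add_zero, ← sum_div, div_mul_eq_mul_div]
  field_simp

lemma lseD3_eq (x u : Fin K → ℝ) :
    lseD3 K x u = diagonal (fun i => softmaxP K x i * (u i - softmaxP K x ⬝ᵥ u))
      - vecMulVec (fun i => softmaxP K x i * (u i - softmaxP K x ⬝ᵥ u)) (softmaxP K x)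
      - vecMulVec (softmaxP K x) (fun i => softmaxP K x i * (u i - softmaxP K x ⬝ᵥ u)) := by
  ext i j
  have hi := hasDerivAt_softmaxP_line x u i
  have hj := hasDerivAt_softmaxP_line x u j
  have hdiag : HasDerivAt (fun s : ℝ => diagonal (softmaxP K (x + s • u)) i j)
      (diagonal (fun i => softmaxP K x i * (u i - softmaxP K x ⬝ᵥ u)) i j) 0 := by
    by_cases hij : i = j
    · subst hij; simpa using hi
    · simpa [hij] using hasDerivAt_const (0 : ℝ) (0 : ℝ)
  have hline : (fun s : ℝ => lseHess K (x + s • u) i j) =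
      fun s => diagonal (softmaxP K (x + s • u)) i j
        - softmaxP K (x + s • u) i * softmaxP K (x + s • u) j := by
    ext s
    simp [lseHess, vecMulVec_apply]
  rw [lseD3, hline, (hdiag.fun_sub (hi.fun_mul hj)).deriv]
  simp only [Matrix.sub_apply, vecMulVec_apply, zero_smul, add_zero]
  ring

lemma dotProduct_lseHess_mulVec (x v : Fin K → ℝ) :
    v ⬝ᵥ lseHess K x *ᵥ v = ∑ i, softmaxP K x i * (v i - softmaxP K x ⬝ᵥ v) ^ 2
      + (1 - ∑ i, softmaxP K x i) * (softmaxP K x ⬝ᵥ v) ^ 2 := by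
  rw [lseHess, sub_mulVec, dotProduct_sub, dotProduct_diagonal_mulVec_self,
    dotProduct_vecMulVec_mulVec_self, sum_mul_sub_sq]
  ring

lemma dotProduct_lseHess_mulVec_nonneg (x v : Fin K → ℝ) : 0 ≤ v ⬝ᵥ lseHess K x *ᵥ v := by
  rw [dotProduct_lseHess_mulVec]
  exact add_nonneg (sum_nonneg fun i _ => mul_nonneg (softmaxP_nonneg x i) (sq_nonneg _))
    (mul_nonneg (sub_nonneg.2 (sum_softmaxP_le_one x)) (sq_nonneg _))

lemma dotProduct_lseD3_mulVec (x u v : Fin K → ℝ) :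
    v ⬝ᵥ lseD3 K x u *ᵥ v
      = ∑ i, softmaxP K x i * (u i - softmaxP K x ⬝ᵥ u) * (v i - softmaxP K x ⬝ᵥ v) ^ 2
        - (1 - ∑ i, softmaxP K x i) * (softmaxP K x ⬝ᵥ u) * (softmaxP K x ⬝ᵥ v) ^ 2 := by
  have hsum : ∑ i, softmaxP K x i * (u i - softmaxP K x ⬝ᵥ u)
      = (1 - ∑ i, softmaxP K x i) * (softmaxP K x ⬝ᵥ u) := by
    simp only [mul_sub, sum_sub_distrib, ← sum_mul, dotProduct]
    ring
  rw [lseD3_eq, sub_mulVec, sub_mulVec, dotProduct_sub, dotProduct_sub,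
    dotProduct_diagonal_mulVec_self, dotProduct_vecMulVec_mulVec_self,
    dotProduct_vecMulVec_mulVec_self, sum_mul_sub_sq, hsum]
  ring

end Softmax

theorem lse_third_derivative_bound_general (K : ℕ) (x u₁ u₂ : Fin K → ℝ) :
    |u₂ ⬝ᵥ (lseD3 K x u₁).mulVec u₂|
      ≤ 3 * Real.sqrt 2 * ‖u₁‖ * (u₂ ⬝ᵥ (lseHess K x).mulVec u₂) := by
  have hconst : (2 : ℝ) ≤ 3 * Real.sqrt 2 := by
    nlinarith [Real.one_le_sqrt.2 one_le_two]
  calc |u₂ ⬝ᵥ lseD3 K x u₁ *ᵥ u₂| ≤ 2 * ‖u₁‖ * (u₂ ⬝ᵥ lseHess K x *ᵥ u₂) := by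
        rw [dotProduct_lseD3_mulVec, dotProduct_lseHess_mulVec]
        exact abs_mixedCentralMoment_le (softmaxP_nonneg x) (sum_softmaxP_le_one x) u₁ u₂
    _ ≤ 3 * Real.sqrt 2 * ‖u₁‖ * (u₂ ⬝ᵥ lseHess K x *ᵥ u₂) := by
        gcongr
        exact dotProduct_lseHess_mulVec_nonneg x u₂

/-- **Proposition B.3.** For `f(z) = log(1 + Σᵢ exp zᵢ)` and all
`x, u₁, u₂ ∈ ℝ^K`: `|D³f(x)[u₁, u₂, u₂]| ≤ 3√2 ‖u₁‖_∞ · u₂ᵀ ∇²f(x) u₂`.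
(The norm on `Fin K → ℝ` is the sup-norm.) -/
theorem lse_third_derivative_bound (K : ℕ) (hK : 1 ≤ K) (x u₁ u₂ : Fin K → ℝ) :
    |u₂ ⬝ᵥ (lseD3 K x u₁).mulVec u₂|
      ≤ 3 * Real.sqrt 2 * ‖u₁‖ * (u₂ ⬝ᵥ (lseHess K x).mulVec u₂) :=
  lse_third_derivative_bound_general K x u₁ u₂
end

section
/- Let K ≥ 1 and f : ℝ^K → ℝ, f(z) = log(1 + Σ_{i=1}^K exp(z_i)). Then for all z₁, z₂ ∈ ℝ^K: exp(−3√2 ‖z₁ − z₂‖_∞) ∇²f(z₁) ⪯ ∇²f(z₂) ⪯ exp(3√2 ‖z₁ − z₂‖_∞) ∇²f(z₁), where A ⪯ B means B − A is positive semidefinite. -/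
open Matrix

/-!
With a reference class of logit `0` and feature `0` adjoined, the quadratic form `xᵀ ∇²f(z) x`
is the variance of the features `(0, x)` under the distribution proportional to the weights
`w = (1, e^{z₁}, …, e^{z_K})`, and that variance is `Σᵢⱼ wᵢ wⱼ (aᵢ - aⱼ)² / (2 (Σᵢ wᵢ)²)`.
Moving `z` by `t = ‖z₁ - z₂‖_∞` changes every weight by a factor in `[e^{-t}, e^t]`, hence the
numerator and the denominator each by a factor in `[e^{-2t}, e^{2t}]`, and the quadratic forms
stay within a factor `e^{4t} ≤ e^{3√2 t}` of each other.
-/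

open Finset

section WeightedVariance

variable {ι : Type*} [Fintype ι]

noncomputable def weightedVariance (w a : ι → ℝ) : ℝ :=
  (∑ i, ∑ j, w i * w j * (a i - a j) ^ 2) / (2 * (∑ i, w i) ^ 2)

theorem sum_sum_mul_mul_sub_sq (w a : ι → ℝ) :
    ∑ i, ∑ j, w i * w j * (a i - a j) ^ 2
      = 2 * ((∑ i, w i) * (∑ i, w i * a i ^ 2) - (∑ i, w i * a i) ^ 2) := by
  calc ∑ i, ∑ j, w i * w j * (a i - a j) ^ 2
      = ∑ i, ∑ j, ((w i * a i ^ 2) * w j + w i * (w j * a j ^ 2)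
          - 2 * (w i * a i) * (w j * a j)) :=
        sum_congr rfl fun i _ => sum_congr rfl fun j _ => by ring
    _ = (∑ i, w i * a i ^ 2) * (∑ j, w j) + (∑ i, w i) * (∑ j, w j * a j ^ 2)
          - 2 * (∑ i, w i * a i) * (∑ j, w j * a j) := by
        simp only [sum_add_distrib, sum_sub_distrib, ← mul_sum, ← sum_mul]
    _ = _ := by ring

theorem weightedVariance_eq (w a : ι → ℝ) (hw : ∑ i, w i ≠ 0) :
    weightedVariance w a
      = (∑ i, w i * a i ^ 2) / ∑ i, w i - ((∑ i, w i * a i) / ∑ i, w i) ^ 2 := by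
  rw [weightedVariance, sum_sum_mul_mul_sub_sq]
  field_simp

theorem sum_sum_mul_mul_sub_sq_nonneg {w : ι → ℝ} (hw : ∀ i, 0 ≤ w i) (a : ι → ℝ) :
    0 ≤ ∑ i, ∑ j, w i * w j * (a i - a j) ^ 2 :=
  sum_nonneg fun i _ => sum_nonneg fun j _ =>
    mul_nonneg (mul_nonneg (hw i) (hw j)) (sq_nonneg (a i - a j))

theorem weightedVariance_nonneg {w : ι → ℝ} (hw : ∀ i, 0 ≤ w i) (a : ι → ℝ) :
    0 ≤ weightedVariance w a :=
  div_nonneg (sum_sum_mul_mul_sub_sq_nonneg hw a) (by positivity)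

theorem pow_four_mul_weightedVariance_le [Nonempty ι] {w w' : ι → ℝ} {c : ℝ} (hc : 0 < c)
    (hw : ∀ i, 0 < w i) (hle : ∀ i, c * w i ≤ w' i) (hle' : ∀ i, c * w' i ≤ w i)
    (a : ι → ℝ) : c ^ 4 * weightedVariance w a ≤ weightedVariance w' a := by
  have hw' : ∀ i, 0 < w' i := fun i => (mul_pos hc (hw i)).trans_le (hle i)
  have hS' : 0 < ∑ i, w' i := sum_pos (fun i _ => hw' i) univ_nonempty
  have hN : c ^ 2 * ∑ i, ∑ j, w i * w j * (a i - a j) ^ 2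
      ≤ ∑ i, ∑ j, w' i * w' j * (a i - a j) ^ 2 := by
    simp only [mul_sum]
    refine sum_le_sum fun i _ => sum_le_sum fun j _ => ?_
    calc c ^ 2 * (w i * w j * (a i - a j) ^ 2) = c * w i * (c * w j) * (a i - a j) ^ 2 := by ring
      _ ≤ w' i * w' j * (a i - a j) ^ 2 := by
        have := hw' i
        have := (mul_pos hc (hw j)).le
        gcongr
        exacts [hle i, hle j]
  have hS : c * ∑ i, w' i ≤ ∑ i, w i := by
    rw [mul_sum]; exact sum_le_sum fun i _ => hle' i
  unfold weightedVariance
  calc c ^ 4 * ((∑ i, ∑ j, w i * w j * (a i - a j) ^ 2) / (2 * (∑ i, w i) ^ 2))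
      ≤ c ^ 4 * ((∑ i, ∑ j, w i * w j * (a i - a j) ^ 2) / (2 * (c * ∑ i, w' i) ^ 2)) := by
        have := sum_sum_mul_mul_sub_sq_nonneg (fun i => (hw i).le) a
        gcongr
    _ = c ^ 2 * (∑ i, ∑ j, w i * w j * (a i - a j) ^ 2) / (2 * (∑ i, w' i) ^ 2) := by
        field_simp
    _ ≤ _ := by gcongr

end WeightedVariance

theorem dotProduct_diagonal_sub_vecMulVec_mulVec {n : Type*} [Fintype n] [DecidableEq n]
    (p x : n → ℝ) :
    x ⬝ᵥ ((diagonal p - vecMulVec p p) *ᵥ x) = ∑ i, p i * x i ^ 2 - (∑ i, p i * x i) ^ 2 := by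
  have hdiag : x ⬝ᵥ (diagonal p *ᵥ x) = ∑ i, p i * x i ^ 2 := by
    simp only [mulVec_diagonal, dotProduct]
    exact sum_congr rfl fun i _ => by ring
  have hrank : x ⬝ᵥ (vecMulVec p p *ᵥ x) = (∑ i, p i * x i) ^ 2 := by
    simp only [vecMulVec_mulVec, dotProduct, Pi.smul_apply, op_smul_eq_mul]
    rw [sq, sum_mul]
    exact sum_congr rfl fun i _ => by ring
  rw [sub_mulVec, dotProduct_sub, hdiag, hrank]

theorem dotProduct_lseHess_mulVec_s5 (K : ℕ) (z x : Fin K → ℝ) :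
    x ⬝ᵥ (lseHess K z *ᵥ x) = weightedVariance (Real.exp ∘ vecCons 0 z) (vecCons 0 x) := by
  have hD : 1 + ∑ k, Real.exp (z k) ≠ 0 := by positivity
  rw [lseHess, dotProduct_diagonal_sub_vecMulVec_mulVec, weightedVariance_eq] <;>
  simp only [softmaxP, Fin.sum_univ_succ, Function.comp_apply, cons_val_zero, cons_val_succ,
    Real.exp_zero, div_mul_eq_mul_div, ← sum_div]
  · field_simp
    ring
  · exact hD

theorem Matrix.posSemidef_sub_of_dotProduct_mulVec_le {n : Type*} [Fintype n]
    {A B : Matrix n n ℝ} (hA : A.IsHermitian) (hB : B.IsHermitian)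
    (h : ∀ x, x ⬝ᵥ (B *ᵥ x) ≤ x ⬝ᵥ (A *ᵥ x)) : (A - B).PosSemidef :=
  .of_dotProduct_mulVec_nonneg (hA.sub hB) fun x => by
    rw [star_trivial, sub_mulVec, dotProduct_sub, sub_nonneg]
    exact h x

theorem lseHess_isHermitian (K : ℕ) (z : Fin K → ℝ) : (lseHess K z).IsHermitian :=
  (isHermitian_diagonal _).sub (posSemidef_vecMulVec_self_star (softmaxP K z)).isHermitian

theorem exp_neg_mul_dotProduct_lseHess_mulVec_le (K : ℕ) {z w : Fin K → ℝ} {s : ℝ}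
    (hs : 4 * ‖z - w‖ ≤ s) (x : Fin K → ℝ) :
    Real.exp (-s) * (x ⬝ᵥ (lseHess K z *ᵥ x)) ≤ x ⬝ᵥ (lseHess K w *ᵥ x) := by
  set t := ‖z - w‖
  have hcoord (i : Fin (K + 1)) : |vecCons 0 z i - vecCons 0 w i| ≤ t := by
    refine Fin.cases ?_ (fun j => ?_) i
    · simp [t]
    · simpa using norm_le_pi_norm (z - w) j
  have hexp {u v : ℝ} (huv : |u - v| ≤ t) : Real.exp (-t) * Real.exp u ≤ Real.exp v := by
    rw [← Real.exp_add]
    exact Real.exp_le_exp.2 (by linarith [(abs_le.1 huv).2])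
  have hs' : Real.exp (-s) ≤ Real.exp (-t) ^ 4 := by
    rw [← Real.exp_nat_mul, Real.exp_le_exp]
    push_cast
    linarith
  rw [dotProduct_lseHess_mulVec_s5, dotProduct_lseHess_mulVec_s5]
  calc Real.exp (-s) * weightedVariance (Real.exp ∘ vecCons 0 z) (vecCons 0 x)
      ≤ Real.exp (-t) ^ 4 * weightedVariance (Real.exp ∘ vecCons 0 z) (vecCons 0 x) :=
        mul_le_mul_of_nonneg_right hs' (weightedVariance_nonneg (fun _ => (Real.exp_pos _).le) _)
    _ ≤ _ := pow_four_mul_weightedVariance_le (Real.exp_pos _) (fun _ => Real.exp_pos _)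
        (fun i => hexp (hcoord i)) (fun i => hexp (abs_sub_comm (vecCons 0 z i) _ ▸ hcoord i)) _

theorem lse_hessian_comparison_general (K : ℕ) (z₁ z₂ : Fin K → ℝ) :
    (lseHess K z₂ - Real.exp (-(3 * Real.sqrt 2 * ‖z₁ - z₂‖)) • lseHess K z₁).PosSemidef ∧
    (Real.exp (3 * Real.sqrt 2 * ‖z₁ - z₂‖) • lseHess K z₁ - lseHess K z₂).PosSemidef := by
  set s := 3 * Real.sqrt 2 * ‖z₁ - z₂‖
  have hs : 4 * ‖z₁ - z₂‖ ≤ s := by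
    have : (4 : ℝ) ≤ 3 * Real.sqrt 2 := by
      nlinarith [Real.sq_sqrt (zero_le_two : (0 : ℝ) ≤ 2), Real.sqrt_nonneg 2]
    exact mul_le_mul_of_nonneg_right this (norm_nonneg _)
  have hs' : 4 * ‖z₂ - z₁‖ ≤ s := norm_sub_rev z₁ z₂ ▸ hs
  have hH := lseHess_isHermitian K
  constructor
  · refine posSemidef_sub_of_dotProduct_mulVec_le (hH z₂) ((hH z₁).smul (.all _)) fun x => ?_
    rw [smul_mulVec, dotProduct_smul, smul_eq_mul]
    exact exp_neg_mul_dotProduct_lseHess_mulVec_le K hs x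
  · refine posSemidef_sub_of_dotProduct_mulVec_le ((hH z₁).smul (.all _)) (hH z₂) fun x => ?_
    rw [smul_mulVec, dotProduct_smul, smul_eq_mul, ← inv_mul_le_iff₀ (Real.exp_pos s),
      ← Real.exp_neg]
    exact exp_neg_mul_dotProduct_lseHess_mulVec_le K hs' x

/-- **Proposition B.4.** For all `z₁, z₂ ∈ ℝ^K`:
`exp(−3√2 ‖z₁ − z₂‖_∞) ∇²f(z₁) ⪯ ∇²f(z₂) ⪯ exp(3√2 ‖z₁ − z₂‖_∞) ∇²f(z₁)`,
where `A ⪯ B` means `B − A` is positive semidefinite and the norm on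
`Fin K → ℝ` is the sup-norm. -/
theorem lse_hessian_comparison (K : ℕ) (hK : 1 ≤ K) (z₁ z₂ : Fin K → ℝ) :
    (lseHess K z₂ - Real.exp (-(3 * Real.sqrt 2 * ‖z₁ - z₂‖)) • lseHess K z₁).PosSemidef ∧
    (Real.exp (3 * Real.sqrt 2 * ‖z₁ - z₂‖) • lseHess K z₁ - lseHess K z₂).PosSemidef :=
  lse_hessian_comparison_general K z₁ z₂
end

section
/- Fix w ∈ ℝ^d, λ > 0, t ∈ ℕ, and a subset 𝒲 ⊆ [t]. For each s ∈ [t] let S_s be a finite assortment with feature vectors x_{si} ∈ ℝ^d, ‖x_{si}‖₂ ≤ 1, and set x_{s0} = 0. Write x̄_s = Σ_{j∈S_s∪{0}} p_s(j|S_s,w) x_{sj} and ∇²ℓ_s(w) = Σ_{i∈S_s∪{0}} p_s(i|S_s,w)(x_{si} − x̄_s)(x_{si} − x̄_s)ᵀ, and define H_s(w) = λ I_d + Σ_{s'∈[s−1]\𝒲} ∇²ℓ_{s'}(w). If ‖x_{si}‖²_{H_s(w)^{-1}} ≤ 1/2 for all i ∈ S_s and all s ∈ [t]\𝒲, then Σ_{s∈[t]\𝒲}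 Σ_{i∈S_s∪{0}} p_s(i|S_s,w) ‖x_{si} − x̄_s‖²_{H_s(w)^{-1}} ≤ 2d log(1 + t/(dλ)). -/
open Matrix

noncomputable section

/-- `x̄ = Σ_{j∈S∪{0}} p(j|S,w) xⱼ` (the outside option has feature `0`). -/
def mnlMean {d : ℕ} {ι : Type*} (S : Finset ι) (x : ι → Fin d → ℝ)
    (w : Fin d → ℝ) : Fin d → ℝ :=
  ∑ j ∈ S, mnlProb S x w j • x j

/-- Centered Hessian of the MNL loss:
`∇²ℓ(w) = Σ_{i∈S∪{0}} p(i|S,w) (xᵢ − x̄)(xᵢ − x̄)ᵀ`, with `x₀ = 0`. -/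
def mnlHessC {d : ℕ} {ι : Type*} (S : Finset ι) (x : ι → Fin d → ℝ)
    (w : Fin d → ℝ) : Matrix (Fin d) (Fin d) ℝ :=
  mnlProb0 S x w • vecMulVec (0 - mnlMean S x w) (0 - mnlMean S x w)
    + ∑ i ∈ S, mnlProb S x w i • vecMulVec (x i - mnlMean S x w) (x i - mnlMean S x w)

end

/-!
Write `V_s = λ I + ∑_{r < s} A_r` for positive semidefinite increments `A_r`. The bound
`det (V + A) ≥ det V * (1 + tr (V⁻¹ A))` (reduce to `det (1 + B) ≥ 1 + tr B` for `B ⪰ 0`) and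
`z / 2 ≤ log (1 + z)` on `[0, 1]` show that `tr (V_s⁻¹ A_s)` is at most twice the increment of
`log det V_s`, so the sum telescopes to `2 (log det V_t - log det V_0)`. AM–GM on the eigenvalues
bounds `log det V_t` by `d log (λ + t / d)` once `tr A_s ≤ 1`.

For the MNL Hessian, `tr (M ∇²ℓ)` is the weighted sum in the statement, and since `∇²ℓ` is the
second moment `∑ pᵢ xᵢ xᵢᵀ` minus `x̄ x̄ᵀ`, it is at most `maxᵢ xᵢᵀ M xᵢ`. Taking `M = I` and
`M = H_s⁻¹` gives `tr ∇²ℓ_s ≤ 1` and `tr (H_s⁻¹ ∇²ℓ_s) ≤ 1 / 2`.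
-/

open Finset

theorem Finset.one_add_sum_le_prod_one_add {ι R : Type*} [CommSemiring R] [PartialOrder R]
    [IsOrderedRing R] (s : Finset ι) {f : ι → R} (hf : ∀ i ∈ s, 0 ≤ f i) :
    1 + ∑ i ∈ s, f i ≤ ∏ i ∈ s, (1 + f i) := by
  induction s using Finset.cons_induction with
  | empty => simp
  | cons a s ha ih =>
    have hfa := hf a (mem_cons_self a s)
    have hfs : ∀ i ∈ s, 0 ≤ f i := fun i hi => hf i (mem_cons_of_mem hi)
    calc 1 + ∑ i ∈ cons a s ha, f i ≤ (1 + f a) * (1 + ∑ i ∈ s, f i) := by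
          rw [sum_cons, mul_add, mul_one, add_mul, one_mul, add_assoc]
          gcongr
          exact le_add_of_nonneg_right (mul_nonneg hfa (sum_nonneg hfs))
      _ ≤ ∏ i ∈ cons a s ha, (1 + f i) := by
          rw [prod_cons]
          exact mul_le_mul_of_nonneg_left (ih hfs) (add_nonneg zero_le_one hfa)

theorem Finset.sum_Icc_one_eq_sum_range {M : Type*} [AddCommMonoid M] (f : ℕ → M) (n : ℕ) :
    ∑ i ∈ Icc 1 n, f i = ∑ i ∈ range n, f (i + 1) := by
  rw [← Ico_add_one_right_eq_Icc, sum_Ico_eq_sum_range]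
  simp [add_comm]

lemma Real.half_le_log_one_add {z : ℝ} (h0 : 0 ≤ z) (h1 : z ≤ 1) :
    z / 2 ≤ Real.log (1 + z) := by
  have h := Real.one_sub_inv_le_log_of_pos (show 0 < 1 + z by linarith)
  have : z / 2 ≤ 1 - (1 + z)⁻¹ := by
    rw [div_le_iff₀ two_pos, sub_mul, inv_mul_eq_div, le_sub_comm, div_le_iff₀ (by linarith)]
    nlinarith
  linarith

namespace Matrix

lemma trace_mul_vecMulVec_self {n : Type*} [Fintype n] (M : Matrix n n ℝ) (u : n → ℝ) :
    (M * vecMulVec u u).trace = u ⬝ᵥ M *ᵥ u := by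
  rw [mul_vecMulVec, trace_vecMulVec, dotProduct_comm]

section Determinant

variable {n : Type*} [Fintype n] [DecidableEq n]

/-- Evaluate the characteristic polynomial `∏ (X - μᵢ)` at `-1`. -/
lemma IsHermitian.det_one_add {B : Matrix n n ℝ} (hB : B.IsHermitian) :
    (1 + B).det = ∏ i, (1 + hB.eigenvalues i) := by
  have h := congrArg (Polynomial.eval (-1)) hB.charpoly_eq
  rw [eval_charpoly, Polynomial.eval_prod] at h
  have hneg : scalar n (-1 : ℝ) - B = -(1 + B) := by
    rw [map_neg, map_one]
    abel
  simp only [Polynomial.eval_sub, Polynomial.eval_X, Polynomial.eval_C, RCLike.ofReal_real_eq_id,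
    id_eq, hneg, det_neg] at h
  have hprod : ∏ i, (-1 - hB.eigenvalues i)
      = (-1) ^ Fintype.card n * ∏ i, (1 + hB.eigenvalues i) := by
    rw [← card_univ, ← prod_const, ← prod_mul_distrib]
    exact prod_congr rfl fun i _ => by ring
  rw [hprod] at h
  exact mul_left_cancel₀ (pow_ne_zero _ (by norm_num)) h

lemma PosSemidef.one_add_trace_le_det_one_add {B : Matrix n n ℝ} (hB : B.PosSemidef) :
    1 + B.trace ≤ (1 + B).det := by
  rw [hB.isHermitian.det_one_add, hB.isHermitian.trace_eq_sum_eigenvalues]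
  simpa using one_add_sum_le_prod_one_add univ fun i _ => hB.eigenvalues_nonneg i

open scoped MatrixOrder in
lemma PosDef.exists_inv_eq_conjTranspose_mul_self {H : Matrix n n ℝ} (hH : H.PosDef) :
    ∃ C : Matrix n n ℝ, H⁻¹ = Cᴴ * C :=
  CStarAlgebra.nonneg_iff_eq_star_mul_self.mp hH.inv.posSemidef.nonneg

lemma PosDef.trace_inv_mul_nonneg {H A : Matrix n n ℝ} (hH : H.PosDef) (hA : A.PosSemidef) :
    0 ≤ (H⁻¹ * A).trace := by
  obtain ⟨C, hC⟩ := hH.exists_inv_eq_conjTranspose_mul_self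
  rw [hC, Matrix.mul_assoc, trace_mul_comm]
  simpa [Matrix.mul_assoc] using (hA.mul_mul_conjTranspose_same C).trace_nonneg

/-- Writing `H⁻¹ = Cᴴ C`, `det (1 + Cᴴ (C A)) = det (1 + C A Cᴴ)` with `C A Cᴴ ⪰ 0`. -/
lemma PosDef.det_mul_one_add_trace_le_det_add {H A : Matrix n n ℝ} (hH : H.PosDef)
    (hA : A.PosSemidef) : H.det * (1 + (H⁻¹ * A).trace) ≤ (H + A).det := by
  obtain ⟨C, hC⟩ := hH.exists_inv_eq_conjTranspose_mul_self
  have hsplit : H + A = H * (1 + Cᴴ * (C * A)) := by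
    rw [← Matrix.mul_assoc, ← hC, mul_add, Matrix.mul_one,
      mul_nonsing_inv_cancel_left _ _ hH.det_pos.ne'.isUnit]
  have htr : (H⁻¹ * A).trace = (C * A * Cᴴ).trace := by
    rw [hC, Matrix.mul_assoc, trace_mul_comm, Matrix.mul_assoc]
  rw [hsplit, det_mul, det_one_add_mul_comm, htr]
  exact mul_le_mul_of_nonneg_left (hA.mul_mul_conjTranspose_same C).one_add_trace_le_det_one_add
    hH.det_pos.le

lemma PosDef.trace_inv_mul_div_two_le_log_det_add_sub_log_det {H A : Matrix n n ℝ}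
    (hH : H.PosDef) (hA : A.PosSemidef) (hle : (H⁻¹ * A).trace ≤ 1) :
    (H⁻¹ * A).trace / 2 ≤ Real.log (H + A).det - Real.log H.det := by
  set z := (H⁻¹ * A).trace
  have hz : 0 ≤ z := hH.trace_inv_mul_nonneg hA
  have hdet : Real.log (H.det * (1 + z)) ≤ Real.log (H + A).det :=
    Real.log_le_log (by have := hH.det_pos; positivity) (hH.det_mul_one_add_trace_le_det_add hA)
  rw [Real.log_mul hH.det_pos.ne' (by positivity)] at hdet
  linarith [Real.half_le_log_one_add hz hle]

/-- AM–GM on the eigenvalues `μᵢ`, via `log (μᵢ / m) ≤ μᵢ / m - 1` with `m` their mean. -/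
lemma PosDef.log_det_le_card_mul_log_trace_div_card {K : Matrix n n ℝ} (hK : K.PosDef) :
    Real.log K.det ≤ Fintype.card n * Real.log (K.trace / Fintype.card n) := by
  rcases isEmpty_or_nonempty n with hn | hn
  · simp
  set μ := hK.isHermitian.eigenvalues
  set m := K.trace / Fintype.card n
  have hμ : ∀ i, 0 < μ i := hK.eigenvalues_pos
  have hd : (0 : ℝ) < Fintype.card n := Nat.cast_pos.mpr Fintype.card_pos
  have htr : K.trace = ∑ i, μ i := by simpa using hK.isHermitian.trace_eq_sum_eigenvalues
  have hdet : K.det = ∏ i, μ i := by simpa using hK.isHermitian.det_eq_prod_eigenvalues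
  have htrpos : 0 < K.trace := htr ▸ sum_pos (fun i _ => hμ i) univ_nonempty
  have hm : 0 < m := div_pos htrpos hd
  have key : ∑ i, Real.log (μ i / m) ≤ ∑ i, (μ i / m - 1) :=
    sum_le_sum fun i _ => Real.log_le_sub_one_of_pos (div_pos (hμ i) hm)
  have hrhs : ∑ i, (μ i / m - 1) = 0 := by
    rw [sum_sub_distrib, ← sum_div, ← htr, div_div_cancel₀ htrpos.ne']
    simp
  have hlog : Real.log K.det = ∑ i, Real.log (μ i / m) + Fintype.card n * Real.log m := by
    simp [hdet, Real.log_prod fun i _ => (hμ i).ne', Real.log_div (hμ _).ne' hm.ne']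
  linarith

end Determinant

section DesignMatrix

variable {n : Type*} [DecidableEq n]

def designMatrix (lam : ℝ) (A : ℕ → Matrix n n ℝ) (s : ℕ) : Matrix n n ℝ :=
  lam • 1 + ∑ r ∈ range s, A r

lemma designMatrix_succ (lam : ℝ) (A : ℕ → Matrix n n ℝ) (s : ℕ) :
    designMatrix lam A (s + 1) = designMatrix lam A s + A s := by
  simp [designMatrix, sum_range_succ, add_assoc]

lemma posDef_designMatrix {lam : ℝ} (hlam : 0 < lam) {A : ℕ → Matrix n n ℝ}
    (hA : ∀ r, (A r).PosSemidef) (s : ℕ) : (designMatrix lam A s).PosDef :=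
  (PosDef.one.smul hlam).add_posSemidef (posSemidef_sum _ fun r _ => hA r)

variable [Fintype n]

lemma trace_designMatrix (lam : ℝ) (A : ℕ → Matrix n n ℝ) (s : ℕ) :
    (designMatrix lam A s).trace = Fintype.card n * lam + ∑ r ∈ range s, (A r).trace := by
  simp [designMatrix, trace_sum, mul_comm]

theorem sum_trace_inv_designMatrix_mul_le {lam : ℝ} (hlam : 0 < lam) {A : ℕ → Matrix n n ℝ}
    (hA : ∀ r, (A r).PosSemidef) {t : ℕ} (htr : ∀ r < t, (A r).trace ≤ 1)
    (hsmall : ∀ r < t, ((designMatrix lam A r)⁻¹ * A r).trace ≤ 1) :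
    ∑ r ∈ range t, ((designMatrix lam A r)⁻¹ * A r).trace
      ≤ 2 * Fintype.card n * Real.log (1 + t / (Fintype.card n * lam)) := by
  set V := designMatrix lam A
  set d : ℝ := (Fintype.card n : ℝ)
  rcases isEmpty_or_nonempty n with hn | hn
  · simp [d]
  have hd : 0 < d := Nat.cast_pos.mpr Fintype.card_pos
  have htele : ∑ r ∈ range t, ((V r)⁻¹ * A r).trace
      ≤ 2 * (Real.log (V t).det - Real.log (V 0).det) := by
    rw [← sum_range_sub (fun r => Real.log (V r).det), mul_sum]
    refine sum_le_sum fun r hr => ?_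
    have := (posDef_designMatrix hlam hA r).trace_inv_mul_div_two_le_log_det_add_sub_log_det
      (hA r) (hsmall r (mem_range.mp hr))
    rw [show V (r + 1) = V r + A r from designMatrix_succ lam A r]
    linarith
  have hV0 : Real.log (V 0).det = d * Real.log lam := by
    simp [V, designMatrix, d, Real.log_pow]
  have htrVt : (V t).trace ≤ d * lam + t := by
    rw [trace_designMatrix]
    simpa [d] using sum_le_sum fun r hr => htr r (mem_range.mp hr)
  have hVt : Real.log (V t).det ≤ d * Real.log ((d * lam + t) / d) := by
    have hVt := posDef_designMatrix hlam hA t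
    refine hVt.log_det_le_card_mul_log_trace_div_card.trans ?_
    have := hVt.trace_pos
    gcongr
  have hlog : Real.log ((d * lam + t) / d) - Real.log lam = Real.log (1 + t / (d * lam)) := by
    rw [← Real.log_div (by positivity) hlam.ne']
    congr 1
    field_simp
  nlinarith

theorem sum_filter_trace_inv_mul_le {lam : ℝ} (hlam : 0 < lam) {A : ℕ → Matrix n n ℝ}
    (hA : ∀ s, (A s).PosSemidef) (W : Finset ℕ) {t : ℕ} {H : ℕ → Matrix n n ℝ}
    (hH : ∀ s, H s = lam • 1 + ∑ s' ∈ (Icc 1 (s - 1)).filter (· ∉ W), A s')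
    (htr : ∀ s ∈ Icc 1 t, s ∉ W → (A s).trace ≤ 1)
    (hsmall : ∀ s ∈ Icc 1 t, s ∉ W → ((H s)⁻¹ * A s).trace ≤ 1) :
    ∑ s ∈ (Icc 1 t).filter (· ∉ W), ((H s)⁻¹ * A s).trace
      ≤ 2 * Fintype.card n * Real.log (1 + t / (Fintype.card n * lam)) := by
  set B : ℕ → Matrix n n ℝ := fun s => if s ∈ W then 0 else A s
  set V := designMatrix lam fun r => B (r + 1)
  have hB : ∀ s, (B s).PosSemidef := fun s => by
    by_cases hs : s ∈ W
    · simpa [B, hs] using PosSemidef.zero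
    · simpa [B, hs] using hA s
  have hHV : ∀ r, H (r + 1) = V r := fun r => by
    rw [hH, sum_filter, sum_Icc_one_eq_sum_range]
    simp only [V, designMatrix, B, ite_not, Nat.add_sub_cancel]
  have hmem : ∀ r < t, r + 1 ∈ Icc 1 t := fun r hr => by
    simp only [mem_Icc]
    omega
  have htrB : ∀ r < t, (B (r + 1)).trace ≤ 1 := fun r hr => by
    by_cases hs : r + 1 ∈ W
    · simp [B, hs]
    · simpa [B, hs] using htr _ (hmem r hr) hs
  have hsmallB : ∀ r < t, ((V r)⁻¹ * B (r + 1)).trace ≤ 1 := fun r hr => by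
    by_cases hs : r + 1 ∈ W
    · simp [B, hs]
    · simpa [B, hs, hHV] using hsmall _ (hmem r hr) hs
  refine le_of_eq_of_le ?_
    (sum_trace_inv_designMatrix_mul_le hlam (fun r => hB (r + 1)) htrB hsmallB)
  rw [sum_filter, sum_Icc_one_eq_sum_range]
  refine sum_congr rfl fun r _ => ?_
  by_cases hs : r + 1 ∈ W
  · simp [B, hs]
  · rw [if_pos hs, hHV, show B (r + 1) = A (r + 1) from if_neg hs]

end DesignMatrix

end Matrix

section MNL

variable {d : ℕ} {ι : Type*} (S : Finset ι) (x : ι → Fin d → ℝ) (w : Fin d → ℝ)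

lemma mnlProb_nonneg (i : ι) : 0 ≤ mnlProb S x w i := by
  unfold mnlProb
  positivity

lemma mnlProb0_nonneg : 0 ≤ mnlProb0 S x w := by
  unfold mnlProb0
  positivity

lemma mnlProb0_add_sum_mnlProb : mnlProb0 S x w + ∑ i ∈ S, mnlProb S x w i = 1 := by
  have : 0 < 1 + ∑ j ∈ S, Real.exp (x j ⬝ᵥ w) := by positivity
  unfold mnlProb0 mnlProb
  rw [← sum_div, ← add_div, div_self this.ne']

lemma mnlHessC_eq :
    mnlHessC S x w = ∑ i ∈ S, mnlProb S x w i • vecMulVec (x i) (x i)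
      - vecMulVec (mnlMean S x w) (mnlMean S x w) := by
  ext j k
  simp only [mnlHessC, Matrix.add_apply, Matrix.sub_apply, Matrix.smul_apply, Matrix.sum_apply,
    vecMulVec_apply, Pi.sub_apply, Pi.zero_apply, smul_eq_mul]
  set p := mnlProb S x w
  set m := mnlMean S x w
  have hm : ∀ j, ∑ i ∈ S, p i * x i j = m j := fun j => by simp [m, mnlMean, p]
  have hexp : ∑ i ∈ S, p i * ((x i j - m j) * (x i k - m k))
      = ∑ i ∈ S, p i * (x i j * x i k) - m k * ∑ i ∈ S, p i * x i j
        - m j * ∑ i ∈ S, p i * x i k + (∑ i ∈ S, p i) * (m j * m k) := by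
    simp only [sum_mul, mul_sum, ← sum_sub_distrib, ← sum_add_distrib]
    exact sum_congr rfl fun i _ => by ring
  rw [hexp, hm, hm]
  linear_combination (m j * m k) * mnlProb0_add_sum_mnlProb S x w

lemma posSemidef_mnlHessC : (mnlHessC S x w).PosSemidef := by
  have hvv : ∀ v : Fin d → ℝ, (vecMulVec v v).PosSemidef := fun v => by
    simpa using posSemidef_vecMulVec_self_star v
  exact ((hvv _).smul (mnlProb0_nonneg S x w)).add
    (posSemidef_sum _ fun i _ => (hvv _).smul (mnlProb_nonneg S x w i))

lemma trace_mul_mnlHessC (M : Matrix (Fin d) (Fin d) ℝ) :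
    (M * mnlHessC S x w).trace
      = mnlProb0 S x w * ((0 - mnlMean S x w) ⬝ᵥ M *ᵥ (0 - mnlMean S x w))
        + ∑ i ∈ S, mnlProb S x w i * ((x i - mnlMean S x w) ⬝ᵥ M *ᵥ (x i - mnlMean S x w)) := by
  simp only [mnlHessC, mul_add, trace_add, mul_sum, trace_sum, mul_smul_comm, trace_smul,
    trace_mul_vecMulVec_self, smul_eq_mul]

lemma trace_mul_mnlHessC_le {M : Matrix (Fin d) (Fin d) ℝ} (hM : M.PosSemidef) {b : ℝ}
    (hb : 0 ≤ b) (hxb : ∀ i ∈ S, x i ⬝ᵥ M *ᵥ x i ≤ b) : (M * mnlHessC S x w).trace ≤ b := by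
  have hsecond : ∑ i ∈ S, mnlProb S x w i * (x i ⬝ᵥ M *ᵥ x i) ≤ (∑ i ∈ S, mnlProb S x w i) * b := by
    rw [sum_mul]
    exact sum_le_sum fun i hi => mul_le_mul_of_nonneg_left (hxb i hi) (mnlProb_nonneg S x w i)
  have hmean : 0 ≤ mnlMean S x w ⬝ᵥ M *ᵥ mnlMean S x w := by
    simpa using hM.dotProduct_mulVec_nonneg (mnlMean S x w)
  have htotal := mnlProb0_add_sum_mnlProb S x w
  have hp0 := mnlProb0_nonneg S x w
  simp only [mnlHessC_eq, mul_sub, trace_sub, mul_sum, trace_sum, mul_smul_comm, trace_smul,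
    trace_mul_vecMulVec_self, smul_eq_mul]
  nlinarith

end MNL

theorem mnl_elliptical_potential_general {d : ℕ} {ι : Type*} (w : Fin d → ℝ)
    (lam : ℝ) (hlam : 0 < lam) (t : ℕ)
    (Wset : Finset ℕ)
    (S : ℕ → Finset ι) (x : ℕ → ι → Fin d → ℝ)
    (hx : ∀ s ∈ Finset.Icc 1 t, ∀ i ∈ S s, l2norm (x s i) ≤ 1)
    (H : ℕ → Matrix (Fin d) (Fin d) ℝ)
    (hH : ∀ s, H s = lam • (1 : Matrix (Fin d) (Fin d) ℝ)
      + ∑ s' ∈ (Finset.Icc 1 (s - 1)).filter (fun s' => s' ∉ Wset),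
          mnlHessC (S s') (x s') w)
    (hsmall : ∀ s ∈ Finset.Icc 1 t, s ∉ Wset →
      ∀ i ∈ S s, x s i ⬝ᵥ (H s)⁻¹.mulVec (x s i) ≤ 1 / 2) :
    ∑ s ∈ (Finset.Icc 1 t).filter (fun s => s ∉ Wset),
      (mnlProb0 (S s) (x s) w *
          ((0 - mnlMean (S s) (x s) w) ⬝ᵥ (H s)⁻¹.mulVec (0 - mnlMean (S s) (x s) w))
        + ∑ i ∈ S s, mnlProb (S s) (x s) w i *
            ((x s i - mnlMean (S s) (x s) w) ⬝ᵥ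
              (H s)⁻¹.mulVec (x s i - mnlMean (S s) (x s) w)))
      ≤ 2 * d * Real.log (1 + t / (d * lam)) := by
  have hHpd : ∀ s, (H s).PosDef := fun s => hH s ▸
    (PosDef.one.smul hlam).add_posSemidef (posSemidef_sum _ fun s' _ => posSemidef_mnlHessC _ _ w)
  simp only [← trace_mul_mnlHessC]
  refine (sum_filter_trace_inv_mul_le hlam (fun s => posSemidef_mnlHessC _ _ w) Wset hH
    ?_ ?_).trans_eq (by simp)
  · intro s hs _
    simpa using trace_mul_mnlHessC_le _ _ w PosSemidef.one zero_le_one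
      fun i hi => by simpa using Real.sqrt_le_one.mp (hx s hs i hi)
  · intro s hs hsW
    exact (trace_mul_mnlHessC_le _ _ w (hHpd s).inv.posSemidef (by norm_num)
      (hsmall s hs hsW)).trans (by norm_num)

/-- **Lemma D.5, elliptical potential lemma for MNL Hessians.**
With `H_s(w) = λ I + Σ_{s'∈[s−1]\𝒲} ∇²ℓ_{s'}(w)`, if
`‖x_{si}‖²_{H_s(w)⁻¹} ≤ 1/2` for all `i ∈ S_s` and all `s ∈ [t]\𝒲`, then
`Σ_{s∈[t]\𝒲} Σ_{i∈S_s∪{0}} p_s(i|S_s,w) ‖x_{si} − x̄_s‖²_{H_s(w)⁻¹}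
  ≤ 2d log(1 + t/(dλ))`. -/
theorem mnl_elliptical_potential {d : ℕ} {ι : Type*} (w : Fin d → ℝ)
    (lam : ℝ) (hlam : 0 < lam) (t : ℕ)
    (Wset : Finset ℕ) (hWset : Wset ⊆ Finset.Icc 1 t)
    (S : ℕ → Finset ι) (x : ℕ → ι → Fin d → ℝ)
    (hx : ∀ s ∈ Finset.Icc 1 t, ∀ i ∈ S s, l2norm (x s i) ≤ 1)
    (H : ℕ → Matrix (Fin d) (Fin d) ℝ)
    (hH : ∀ s, H s = lam • (1 : Matrix (Fin d) (Fin d) ℝ)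
      + ∑ s' ∈ (Finset.Icc 1 (s - 1)).filter (fun s' => s' ∉ Wset),
          mnlHessC (S s') (x s') w)
    (hsmall : ∀ s ∈ Finset.Icc 1 t, s ∉ Wset →
      ∀ i ∈ S s, x s i ⬝ᵥ (H s)⁻¹.mulVec (x s i) ≤ 1 / 2) :
    ∑ s ∈ (Finset.Icc 1 t).filter (fun s => s ∉ Wset),
      (mnlProb0 (S s) (x s) w *
          ((0 - mnlMean (S s) (x s) w) ⬝ᵥ (H s)⁻¹.mulVec (0 - mnlMean (S s) (x s) w))
        + ∑ i ∈ S s, mnlProb (S s) (x s) w i *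
            ((x s i - mnlMean (S s) (x s) w) ⬝ᵥ
              (H s)⁻¹.mulVec (x s i - mnlMean (S s) (x s) w)))
      ≤ 2 * d * Real.log (1 + t / (d * lam)) :=
  mnl_elliptical_potential_general w lam hlam t Wset S x hx H hH hsmall
end

section
/- Let N, K ≥ 1, and for each item i ∈ [N] let r_i ∈ [0,1] be a reward and v_i ∈ ℝ a utility. For S ⊆ [N] define the optimistic expected revenue R̃(S) = (Σ_{i∈S} exp(v_i) r_i) / (1 + Σ_{j∈S} exp(v_j)), and let 𝒮 = {S ⊆ [N] : |S| ≤ K}. If S* ∈ 𝒮 maximizes R̃ over 𝒮, then r_i ≥ R̃(S*) for every i ∈ S*. -/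
/-- Optimistic expected revenue of an assortment `S ⊆ [N]` given item
utilities `v` and rewards `r`: `R̃(S) = (Σ_{i∈S} exp(vᵢ) rᵢ)/(1 + Σ_{j∈S} exp(vⱼ))`. -/
noncomputable def optRev (N : ℕ) (r v : Fin N → ℝ) (S : Finset (Fin N)) : ℝ :=
  (∑ i ∈ S, Real.exp (v i) * r i) / (1 + ∑ j ∈ S, Real.exp (v j))

/-- **core of Lemma D.4.** If `S*` maximizes the optimistic
expected revenue `R̃` over all assortments of size at most `K`, then every item
offered in `S*` has reward at least `R̃(S*)`. -/
theorem reward_ge_optimal_revenue (N K : ℕ) (hN : 1 ≤ N) (hK : 1 ≤ K)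
    (r v : Fin N → ℝ) (hr : ∀ i, r i ∈ Set.Icc (0:ℝ) 1)
    (Sstar : Finset (Fin N)) (hcard : Sstar.card ≤ K)
    (hmax : ∀ S : Finset (Fin N), S.card ≤ K → optRev N r v S ≤ optRev N r v Sstar) :
    ∀ i ∈ Sstar, optRev N r v Sstar ≤ r i := by
  intro i hi
  set A := ∑ j ∈ Sstar.erase i, Real.exp (v j) * r j with hA
  set B := ∑ j ∈ Sstar.erase i, Real.exp (v j) with hB
  have hBnn : 0 ≤ B := Finset.sum_nonneg fun j _ => (Real.exp_pos _).le
  have hsum1 : ∑ j ∈ Sstar, Real.exp (v j) * r j = A + Real.exp (v i) * r i := by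
    rw [hA, Finset.sum_erase_add _ _ hi]
  have hsum2 : ∑ j ∈ Sstar, Real.exp (v j) = B + Real.exp (v i) := by
    rw [hB, Finset.sum_erase_add _ _ hi]
  have he : 0 < Real.exp (v i) := Real.exp_pos _
  have hd1 : (0:ℝ) < 1 + B := by linarith
  have hd2 : (0:ℝ) < 1 + (B + Real.exp (v i)) := by linarith
  have hle : optRev N r v (Sstar.erase i) ≤ optRev N r v Sstar :=
    hmax _ (le_trans (le_trans (Finset.card_le_card (Finset.erase_subset _ _)) le_rfl) hcard)
  set R := optRev N r v Sstar with hR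
  have hRdef : R * (1 + (B + Real.exp (v i))) = A + Real.exp (v i) * r i := by
    rw [hR]; unfold optRev
    rw [hsum1, hsum2]
    field_simp
  have hA_le : A ≤ R * (1 + B) := by
    have : A / (1 + B) ≤ R := by
      have := hle
      unfold optRev at this
      rwa [← hA, ← hB] at this
    calc A = (A / (1 + B)) * (1 + B) := by field_simp
    _ ≤ R * (1 + B) := by exact mul_le_mul_of_nonneg_right this hd1.le
  have : R * Real.exp (v i) ≤ Real.exp (v i) * r i := by nlinarith
  nlinarith
end
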